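/- arXiv:2011.12239 — 9 statements merged into one kernel-verified Lean document; each statement's English description precedes it below -/
import Mathlib

section
/- Suppose ℒ = Θ̃ Π P Π' Θ̃ = V E V' with V'V = I_K and E diagonal invertible, and let I = (i_1,…,i_K) be indices of pure nodes with Π(I,:) = I_K. Then: (1) the K×K matrix B := Θ̃(I,I)^{-1} V(I,:) satisfies V = Θ̃ Π B; (2) F B = B E, where F = P Π' Θ̃² Π, i.e. the k-th column of B is a right eigenvector of F with eigenvalue E(k,k); and (3) B is the unique K×K matrix with V = Θ̃ Π B: if V = Θ̃ Π B̃ for some K×K matrix B̃ then B̃ = B. -/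
/-!
Since `V'V = I` and `E` is invertible, `V = ℒ V E⁻¹ = Θ̃ Π C` with `C = P Π' Θ̃ V E⁻¹`,
and `P Π' Θ̃ V = C E`. Restricting `V = Θ̃ Π C` to the pure rows, where `Π(I,:) = I_K`,
gives `V(I,:) = Θ̃(I,I) C`; so any such `C` equals `B = Θ̃(I,I)⁻¹ V(I,:)`, and
`F B = P Π' Θ̃ (Θ̃ Π B) = P Π' Θ̃ V = B E`.
-/

open Matrix

namespace Matrix

variable {m n k R : Type*} [Fintype n] [Fintype k] [DecidableEq k]

theorem submatrix_diagonal_mul_mul_of_submatrix_eq_one [DecidableEq n] [CommSemiring R]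
    (θ : n → R) {Pim : Matrix n k R} {I : k → n} (hpure : Pim.submatrix I id = 1)
    (B : Matrix k m R) :
    (diagonal θ * Pim * B).submatrix I id = diagonal (θ ∘ I) * B := by
  have hrows : (diagonal θ * Pim).submatrix I id = diagonal (θ ∘ I) := by
    rw [← mul_one (diagonal (θ ∘ I)), ← hpure]
    ext
    simp [diagonal_mul]
  rw [submatrix_mul _ _ _ id _ Function.bijective_id, hrows, submatrix_id_id]

theorem eq_diagonal_inv_mul_submatrix_of_eq_diagonal_mul [DecidableEq n] [Field R]
    {θ : n → R} (hθ : ∀ i, θ i ≠ 0) {Pim : Matrix n k R} {I : k → n}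
    (hpure : Pim.submatrix I id = 1) {V : Matrix n m R} {B : Matrix k m R}
    (hV : V = diagonal θ * Pim * B) :
    B = diagonal (fun l => (θ (I l))⁻¹) * V.submatrix I id := by
  rw [hV, submatrix_diagonal_mul_mul_of_submatrix_eq_one θ hpure, ← Matrix.mul_assoc,
    diagonal_mul_diagonal]
  simp [inv_mul_cancel₀ (hθ _)]

theorem exists_eq_mul_of_mul_eq_mul_mul_transpose [Fintype m] [CommRing R]
    {A : Matrix n m R} {G : Matrix m n R} {V : Matrix n k R} {E : Matrix k k R}
    (hE : IsUnit E) (hV : Vᵀ * V = 1) (hAG : A * G = V * E * Vᵀ) :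
    ∃ C : Matrix m k R, V = A * C ∧ G * V = C * E := by
  have hdet : IsUnit E.det := (isUnit_iff_isUnit_det E).mp hE
  refine ⟨G * V * E⁻¹, ?_, ?_⟩
  · calc V = V * E * (Vᵀ * V) * E⁻¹ := by
          rw [hV, Matrix.mul_one, Matrix.mul_assoc, mul_nonsing_inv E hdet, Matrix.mul_one]
      _ = A * (G * V * E⁻¹) := by
          rw [← Matrix.mul_assoc _ Vᵀ, ← hAG]
          simp only [Matrix.mul_assoc]
  · rw [Matrix.mul_assoc _ E⁻¹, nonsing_inv_mul E hdet, Matrix.mul_one]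

end Matrix

theorem existB_of_ideal_laplacian_general {n K : ℕ}
    (Pim : Matrix (Fin n) (Fin K) ℝ)
    (I : Fin K → Fin n)
    (hpure : ∀ k l, Pim (I k) l = if l = k then (1 : ℝ) else 0)
    (θ : Fin n → ℝ) (hθ : ∀ i, 0 < θ i)
    (P : Matrix (Fin K) (Fin K) ℝ)
    (V : Matrix (Fin n) (Fin K) ℝ) (E : Matrix (Fin K) (Fin K) ℝ)
    (hEunit : IsUnit E)
    (hVorth : Vᵀ * V = 1)
    (hL : Matrix.diagonal θ * Pim * P * Pimᵀ * Matrix.diagonal θ = V * E * Vᵀ) :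
    V = Matrix.diagonal θ * Pim *
        (Matrix.diagonal (fun k => (θ (I k))⁻¹) * V.submatrix I id) ∧
    (P * Pimᵀ * Matrix.diagonal (fun i => θ i ^ 2) * Pim) *
        (Matrix.diagonal (fun k => (θ (I k))⁻¹) * V.submatrix I id) =
      (Matrix.diagonal (fun k => (θ (I k))⁻¹) * V.submatrix I id) * E ∧
    (∀ B : Matrix (Fin K) (Fin K) ℝ, V = Matrix.diagonal θ * Pim * B →
      B = Matrix.diagonal (fun k => (θ (I k))⁻¹) * V.submatrix I id) := by
  have hpure_rows : Pim.submatrix I id = 1 := by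
    ext k l
    simp [hpure, one_apply, eq_comm]
  have uniq := fun B (hB : V = diagonal θ * Pim * B) ↦
    eq_diagonal_inv_mul_submatrix_of_eq_diagonal_mul (fun i ↦ (hθ i).ne') hpure_rows hB
  obtain ⟨C, hVC, hGV⟩ := exists_eq_mul_of_mul_eq_mul_mul_transpose
    (A := diagonal θ * Pim) (G := P * Pimᵀ * diagonal θ) hEunit hVorth
    (by simpa only [Matrix.mul_assoc] using hL)
  refine ⟨?_, ?_, uniq⟩ <;> rw [← uniq C hVC]
  · exact hVC
  · calc P * Pimᵀ * diagonal (fun i ↦ θ i ^ 2) * Pim * C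
        = P * Pimᵀ * diagonal θ * (diagonal θ * Pim * C) := by
          simp only [sq, ← diagonal_mul_diagonal, Matrix.mul_assoc]
      _ = C * E := by rw [← hVC, hGV]

/-- Under the ideal DCMM setup `ℒ = Θ̃ Π P Π' Θ̃ = V E V'` with `V'V = I_K`,
`E` diagonal invertible, and pure-node index tuple `I` with `Π(I,:) = I_K`, the matrix
`B := Θ̃(I,I)⁻¹ V(I,:)` satisfies (1) `V = Θ̃ Π B`; (2) `F B = B E` with
`F = P Π' Θ̃² Π` (so the `k`-th column of `B` is a right eigenvector of `F` with
eigenvalue `E(k,k)`); (3) `B` is the unique matrix with `V = Θ̃ Π B`. -/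
theorem existB_of_ideal_laplacian {n K : ℕ} (hK : 1 ≤ K) (hKn : K ≤ n)
    (Pim : Matrix (Fin n) (Fin K) ℝ)
    (hnonneg : ∀ i k, 0 ≤ Pim i k)
    (hrowsum : ∀ i, ∑ k, Pim i k = 1)
    (I : Fin K → Fin n)
    (hpure : ∀ k l, Pim (I k) l = if l = k then (1 : ℝ) else 0)
    (θ : Fin n → ℝ) (hθ : ∀ i, 0 < θ i)
    (P : Matrix (Fin K) (Fin K) ℝ) (hPsymm : P.IsSymm)
    (V : Matrix (Fin n) (Fin K) ℝ) (E : Matrix (Fin K) (Fin K) ℝ)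
    (hEdiag : E.IsDiag) (hEunit : IsUnit E)
    (hVorth : Vᵀ * V = 1)
    (hL : Matrix.diagonal θ * Pim * P * Pimᵀ * Matrix.diagonal θ = V * E * Vᵀ) :
    V = Matrix.diagonal θ * Pim *
        (Matrix.diagonal (fun k => (θ (I k))⁻¹) * V.submatrix I id) ∧
    (P * Pimᵀ * Matrix.diagonal (fun i => θ i ^ 2) * Pim) *
        (Matrix.diagonal (fun k => (θ (I k))⁻¹) * V.submatrix I id) =
      (Matrix.diagonal (fun k => (θ (I k))⁻¹) * V.submatrix I id) * E ∧
    (∀ B : Matrix (Fin K) (Fin K) ℝ, V = Matrix.diagonal θ * Pim * B →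
      B = Matrix.diagonal (fun k => (θ (I k))⁻¹) * V.submatrix I id) :=
  existB_of_ideal_laplacian_general Pim I hpure θ hθ P V E hEunit hVorth hL
end

section
/- Suppose V = Θ̃ Π B with B ∈ ℝ^{K×K} invertible, where Π is a membership matrix with pure-node index tuple I satisfying Π(I,:) = I_K and Θ̃ is diagonal with strictly positive diagonal. Then every row of V is nonzero, and there exists a matrix Y ∈ ℝ^{n×K} with all entries nonnegative and no row equal to zero such that V_{*,1} = Y V_{*,1}(I,:); explicitly Y = N_M Π Θ̃(I,I)^{-1} N_V(I,I)^{-1}, where N_M is the diagonal matrix with N_M(i,i) = 1/‖(Π Θ̃(I,I)^{-1} V(I,:))(i,:)‖₂. Moreover, for any two indices i, j with Π(i,:) = Π(j,:), one has V_{*,1}(i,:) = V_{*,1}(j,:). -/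
/-! Write `V = diag θ · (Π B)`. Row normalization is blind to positive row scalings, so
`V₊ = (Π B)₊`, and `V₊(I,:) = B₊` because the pure rows of `Π B` are the rows of `B`.
Expanding `A₊ = diag(‖A i‖⁻¹) A` on both sides gives
`(Π B)₊ = diag(‖(Π B) i‖⁻¹) Π diag(‖B k‖) B₊`, and this coefficient matrix is `Y`
since `M = Π B`. Rows of `Π B` are nonzero because rows of `Π` sum to one and `B` is
invertible. -/

open Matrix

/-- The Euclidean norm of a row vector. -/
noncomputable def rnorm {m : ℕ} (v : Fin m → ℝ) : ℝ := Real.sqrt (∑ j, v j ^ 2)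

/-- Row-wise ℓ₂-normalization of a matrix. -/
noncomputable def rowNormalize {n m : ℕ} (V : Matrix (Fin n) (Fin m) ℝ) :
    Matrix (Fin n) (Fin m) ℝ :=
  Matrix.of fun i j => V i j / rnorm (V i)

lemma rnorm_eq_norm {m : ℕ} (v : Fin m → ℝ) :
    rnorm v = ‖(WithLp.toLp 2 v : EuclideanSpace ℝ (Fin m))‖ := by
  simp [rnorm, EuclideanSpace.norm_eq]

lemma rnorm_nonneg {m : ℕ} (v : Fin m → ℝ) : 0 ≤ rnorm v := Real.sqrt_nonneg _

lemma rnorm_pos_iff {m : ℕ} {v : Fin m → ℝ} : 0 < rnorm v ↔ v ≠ 0 := by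
  simp [rnorm_eq_norm]

lemma rnorm_smul {m : ℕ} (c : ℝ) (v : Fin m → ℝ) : rnorm (c • v) = |c| * rnorm v := by
  simp [rnorm_eq_norm, WithLp.toLp_smul, norm_smul]

lemma ne_zero_of_sum_eq_one {m : ℕ} {p : Fin m → ℝ} (h : ∑ k, p k = 1) : p ≠ 0 := by
  rintro rfl
  simp at h

section Diagonal

variable {n m : ℕ}

lemma diagonal_mul_row (d : Fin n → ℝ) (A : Matrix (Fin n) (Fin m) ℝ) (i : Fin n) :
    (diagonal d * A) i = d i • A i := by
  ext j; simp [diagonal_mul]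

lemma rnorm_diagonal_mul_row {d : Fin n → ℝ} {i : Fin n} (hd : 0 ≤ d i)
    (A : Matrix (Fin n) (Fin m) ℝ) : rnorm ((diagonal d * A) i) = d i * rnorm (A i) := by
  rw [diagonal_mul_row, rnorm_smul, abs_of_nonneg hd]

lemma submatrix_diagonal_mul {k : ℕ} (d : Fin n → ℝ) (A : Matrix (Fin n) (Fin m) ℝ)
    (I : Fin k → Fin n) :
    (diagonal d * A).submatrix I id = diagonal (fun l => d (I l)) * A.submatrix I id := by
  ext l j; simp [diagonal_mul]

lemma diagonal_mul_diagonal_inv {d : Fin n → ℝ} (hd : ∀ i, d i ≠ 0) :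
    diagonal d * diagonal (fun i => (d i)⁻¹) = 1 := by
  rw [diagonal_mul_diagonal, ← diagonal_one]
  exact congrArg diagonal (funext fun i => mul_inv_cancel₀ (hd i))

lemma diagonal_inv_mul_diagonal {d : Fin n → ℝ} (hd : ∀ i, d i ≠ 0) :
    diagonal (fun i => (d i)⁻¹) * diagonal d = 1 := by
  rw [diagonal_mul_diagonal, ← diagonal_one]
  exact congrArg diagonal (funext fun i => inv_mul_cancel₀ (hd i))

lemma diagonal_mul_mul_diagonal_apply (a : Fin n → ℝ) (P : Matrix (Fin n) (Fin m) ℝ)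
    (b : Fin m → ℝ) (i : Fin n) (k : Fin m) :
    (diagonal a * P * diagonal b) i k = a i * P i k * b k := by
  simp [diagonal_mul, mul_diagonal]

lemma diagonal_mul_mul_diagonal_nonneg {a : Fin n → ℝ} {P : Matrix (Fin n) (Fin m) ℝ}
    {b : Fin m → ℝ} (ha : ∀ i, 0 ≤ a i) (hP : ∀ i k, 0 ≤ P i k) (hb : ∀ k, 0 ≤ b k)
    (i : Fin n) (k : Fin m) : 0 ≤ (diagonal a * P * diagonal b) i k := by
  rw [diagonal_mul_mul_diagonal_apply]
  exact mul_nonneg (mul_nonneg (ha i) (hP i k)) (hb k)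

lemma diagonal_mul_mul_diagonal_row_ne_zero {a : Fin n → ℝ} {P : Matrix (Fin n) (Fin m) ℝ}
    {b : Fin m → ℝ} {i : Fin n} (ha : a i ≠ 0) (hb : ∀ k, b k ≠ 0) (hP : P i ≠ 0) :
    (diagonal a * P * diagonal b) i ≠ 0 := by
  refine fun h => hP (funext fun k => ?_)
  have hk := congrFun h k
  rw [Pi.zero_apply, diagonal_mul_mul_diagonal_apply] at hk
  simpa [ha, hb k] using hk

end Diagonal

section RowNormalize

variable {n m : ℕ}

lemma rowNormalize_apply_row (A : Matrix (Fin n) (Fin m) ℝ) (i : Fin n) :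
    rowNormalize A i = (rnorm (A i))⁻¹ • A i := by
  ext j; simp [rowNormalize, div_eq_inv_mul]

lemma rowNormalize_eq_diagonal_mul (A : Matrix (Fin n) (Fin m) ℝ) :
    rowNormalize A = diagonal (fun i => (rnorm (A i))⁻¹) * A := by
  ext i j; simp [rowNormalize, diagonal_mul, div_eq_inv_mul]

lemma rowNormalize_submatrix {k : ℕ} (A : Matrix (Fin n) (Fin m) ℝ) (I : Fin k → Fin n) :
    rowNormalize (A.submatrix I id) = (rowNormalize A).submatrix I id := rfl

lemma rowNormalize_diagonal_mul {d : Fin n → ℝ} (hd : ∀ i, 0 < d i)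
    (A : Matrix (Fin n) (Fin m) ℝ) : rowNormalize (diagonal d * A) = rowNormalize A := by
  ext i : 1
  rw [rowNormalize_apply_row, rowNormalize_apply_row, rnorm_diagonal_mul_row (hd i).le,
    diagonal_mul_row, smul_smul, mul_inv, mul_right_comm, inv_mul_cancel₀ (hd i).ne', one_mul]

lemma rowNormalize_mul_eq_mul_rowNormalize (P : Matrix (Fin n) (Fin m) ℝ)
    {B : Matrix (Fin m) (Fin m) ℝ} (hB : ∀ k, B k ≠ 0) :
    rowNormalize (P * B) = (diagonal (fun i => (rnorm ((P * B) i))⁻¹) * P *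
      diagonal (fun k => rnorm (B k))) * rowNormalize B := by
  rw [rowNormalize_eq_diagonal_mul, rowNormalize_eq_diagonal_mul B]
  simp only [Matrix.mul_assoc]
  rw [← Matrix.mul_assoc (diagonal _) (diagonal _),
    diagonal_mul_diagonal_inv fun k => (rnorm_pos_iff.mpr (hB k)).ne', Matrix.one_mul]

end RowNormalize

lemma mul_row_ne_zero_of_isUnit {n K : ℕ} {P : Matrix (Fin n) (Fin K) ℝ}
    {B : Matrix (Fin K) (Fin K) ℝ} (hB : IsUnit B) {i : Fin n} (hP : P i ≠ 0) :
    (P * B) i ≠ 0 := by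
  rw [mul_apply_eq_vecMul]
  exact fun h => hP (vecMul_injective_of_isUnit hB (h.trans (zero_vecMul B).symm))

lemma submatrix_mul_eq_of_pure {n K m : ℕ} {P : Matrix (Fin n) (Fin K) ℝ} {I : Fin K → Fin n}
    (hpure : ∀ k l, P (I k) l = if l = k then (1 : ℝ) else 0) (B : Matrix (Fin K) (Fin m) ℝ) :
    (P * B).submatrix I id = B := by
  ext k j; simp [mul_apply, hpure]

theorem ideal_cone_structure_general {n K : ℕ}
    (Pim : Matrix (Fin n) (Fin K) ℝ)
    (hnonneg : ∀ i k, 0 ≤ Pim i k)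
    (hrowsum : ∀ i, ∑ k, Pim i k = 1)
    (I : Fin K → Fin n)
    (hpure : ∀ k l, Pim (I k) l = if l = k then (1 : ℝ) else 0)
    (θ : Fin n → ℝ) (hθ : ∀ i, 0 < θ i)
    (B : Matrix (Fin K) (Fin K) ℝ) (hB : IsUnit B)
    (V : Matrix (Fin n) (Fin K) ℝ)
    (hV : V = Matrix.diagonal θ * Pim * B) :
    (∀ i, V i ≠ 0) ∧
    (let M := Pim * Matrix.diagonal (fun k => (θ (I k))⁻¹) * V.submatrix I id
     let Y := Matrix.diagonal (fun i => (rnorm (M i))⁻¹) * Pim *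
       Matrix.diagonal (fun k => (θ (I k))⁻¹) *
       Matrix.diagonal (fun k => rnorm (V (I k)))
     (∀ i k, 0 ≤ Y i k) ∧ (∀ i, Y i ≠ 0) ∧
       rowNormalize V = Y * (rowNormalize V).submatrix I id) ∧
    (∀ i j, Pim i = Pim j → rowNormalize V i = rowNormalize V j) := by
  have hVF : V = diagonal θ * (Pim * B) := by rw [hV, Matrix.mul_assoc]
  have hFI : (Pim * B).submatrix I id = B := submatrix_mul_eq_of_pure hpure B
  have hVI : V.submatrix I id = diagonal (fun k => θ (I k)) * B := by
    rw [hVF, submatrix_diagonal_mul, hFI]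
  have hPim : ∀ i, Pim i ≠ 0 := fun i => ne_zero_of_sum_eq_one (hrowsum i)
  have hF : ∀ i, (Pim * B) i ≠ 0 := fun i => mul_row_ne_zero_of_isUnit hB (hPim i)
  have hBrow : ∀ k, B k ≠ 0 := fun k => congrFun hFI k ▸ hF (I k)
  refine ⟨fun i => ?_, ?_, fun i j hij => ?_⟩
  · rw [hVF, diagonal_mul_row]
    exact smul_ne_zero (hθ i).ne' (hF i)
  · intro M Y
    have hM : M = Pim * B := by
      simp only [M, hVI, Matrix.mul_assoc]
      rw [← Matrix.mul_assoc (diagonal _), diagonal_inv_mul_diagonal fun k => (hθ (I k)).ne',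
        Matrix.one_mul]
    have hVIrow (k : Fin K) : rnorm (V (I k)) = θ (I k) * rnorm (B k) := by
      rw [show V (I k) = V.submatrix I id k from rfl, hVI,
        rnorm_diagonal_mul_row (d := fun k => θ (I k)) (hθ (I k)).le]
    have hY : Y = diagonal (fun i => (rnorm ((Pim * B) i))⁻¹) * Pim *
        diagonal (fun k => rnorm (B k)) := by
      simp only [Y, hM, Matrix.mul_assoc, diagonal_mul_diagonal, hVIrow]
      congr 3
      exact funext fun k => inv_mul_cancel_left₀ (hθ (I k)).ne' _
    have hb (k : Fin K) : 0 < rnorm (B k) := rnorm_pos_iff.mpr (hBrow k)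
    refine ⟨?_, fun i => ?_, ?_⟩
    · exact hY ▸ diagonal_mul_mul_diagonal_nonneg (fun i => inv_nonneg.mpr (rnorm_nonneg _))
        hnonneg fun k => (hb k).le
    · exact hY ▸ diagonal_mul_mul_diagonal_row_ne_zero
        (inv_ne_zero (rnorm_pos_iff.mpr (hF i)).ne') (fun k => (hb k).ne') (hPim i)
    · rw [hY, ← rowNormalize_submatrix, hVI, rowNormalize_diagonal_mul fun k => hθ (I k), hVF,
        rowNormalize_diagonal_mul hθ, rowNormalize_mul_eq_mul_rowNormalize Pim hBrow]
  · rw [hVF, rowNormalize_diagonal_mul hθ, rowNormalize_apply_row, rowNormalize_apply_row,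
      mul_apply_eq_vecMul, mul_apply_eq_vecMul, hij]

/-- **Ideal Cone.** If `V = Θ̃ Π B` with `B` invertible, `Π` a membership matrix
with pure-node tuple `I` (`Π(I,:) = I_K`) and `Θ̃` diagonal positive, then every row of `V`
is nonzero, the explicit matrix `Y = N_M Π Θ̃(I,I)⁻¹ N_V(I,I)⁻¹` is nonnegative with no zero
row and satisfies `V₊ = Y V₊(I,:)` for the row-normalization `V₊` of `V`; moreover
`Π(i,:) = Π(j,:)` implies `V₊(i,:) = V₊(j,:)`. -/
theorem ideal_cone_structure {n K : ℕ} (hK : 1 ≤ K) (hKn : K ≤ n)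
    (Pim : Matrix (Fin n) (Fin K) ℝ)
    (hnonneg : ∀ i k, 0 ≤ Pim i k)
    (hrowsum : ∀ i, ∑ k, Pim i k = 1)
    (I : Fin K → Fin n)
    (hpure : ∀ k l, Pim (I k) l = if l = k then (1 : ℝ) else 0)
    (θ : Fin n → ℝ) (hθ : ∀ i, 0 < θ i)
    (B : Matrix (Fin K) (Fin K) ℝ) (hB : IsUnit B)
    (V : Matrix (Fin n) (Fin K) ℝ)
    (hV : V = Matrix.diagonal θ * Pim * B) :
    (∀ i, V i ≠ 0) ∧
    (let M := Pim * Matrix.diagonal (fun k => (θ (I k))⁻¹) * V.submatrix I id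
     let Y := Matrix.diagonal (fun i => (rnorm (M i))⁻¹) * Pim *
       Matrix.diagonal (fun k => (θ (I k))⁻¹) *
       Matrix.diagonal (fun k => rnorm (V (I k)))
     (∀ i k, 0 ≤ Y i k) ∧ (∀ i, Y i ≠ 0) ∧
       rowNormalize V = Y * (rowNormalize V).submatrix I id) ∧
    (∀ i j, Pim i = Pim j → rowNormalize V i = rowNormalize V j) :=
  ideal_cone_structure_general Pim hnonneg hrowsum I hpure θ hθ B hB V hV
end

section
/- Suppose ℒ = Θ̃ Π P Π' Θ̃ = V E V', where Π is a membership matrix with pure-node index tuple I satisfying Π(I,:) = I_K, Θ̃ is diagonal with strictly positive diagonal, and every diagonal entry of the symmetric matrix P equals 1. Then for each k ∈ {1,…,K}, the k-th diagonal entry of V(I,:) E V'(I,:) is strictly positive and Θ̃(i_k,i_k) = √((V(I,:) E V'(I,:))(k,k)); that is, Θ̃(I,I) = √(diag(V(I,:) E V'(I,:))). -/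
/-! At a pure node `i_k` the row of `Π` is `e_k`, so `ℒ(i_k, i_k) = θ̃(i_k)² P(k, k) = θ̃(i_k)²`,
and this entry of `V E V'` is the `(k, k)` entry of `V(I,:) E V(I,:)'`. -/

open Matrix

namespace Matrix

variable {m n κ R : Type*}

theorem mul_mul_transpose_apply_of_rows_single [Fintype κ] [DecidableEq κ] [Semiring R]
    (A : Matrix m κ R) (B : Matrix n κ R) (P : Matrix κ κ R) {i : m} {j : n} {k l : κ}
    (hA : ∀ c, A i c = if c = k then 1 else 0) (hB : ∀ c, B j c = if c = l then 1 else 0) :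
    (A * P * Bᵀ) i j = P k l := by
  simp [mul_apply, hA, hB]

theorem diagonal_mul_mul_diagonal_apply [Fintype m] [DecidableEq m] [NonUnitalNonAssocSemiring R]
    (d : m → R) (M : Matrix m m R) (i j : m) :
    (diagonal d * M * diagonal d) i j = d i * M i j * d j := by
  rw [mul_diagonal, diagonal_mul]

theorem mul_mul_transpose_submatrix_apply [Fintype n] [NonUnitalCommSemiring R]
    (V : Matrix m n R) (E : Matrix n n R) (I : κ → m) (k l : κ) :
    (V.submatrix I id * E * (V.submatrix I id)ᵀ) k l = (V * E * Vᵀ) (I k) (I l) := by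
  simp [mul_apply]

end Matrix

theorem thetaTilde_eq_sqrt_diag_general {n K : ℕ}
    (Pim : Matrix (Fin n) (Fin K) ℝ)
    (I : Fin K → Fin n)
    (hpure : ∀ k l, Pim (I k) l = if l = k then (1 : ℝ) else 0)
    (θ : Fin n → ℝ) (hθ : ∀ i, 0 < θ i)
    (P : Matrix (Fin K) (Fin K) ℝ) (hPdiag : ∀ k, P k k = 1)
    (V : Matrix (Fin n) (Fin K) ℝ) (E : Matrix (Fin K) (Fin K) ℝ)
    (hL : Matrix.diagonal θ * Pim * P * Pimᵀ * Matrix.diagonal θ = V * E * Vᵀ) :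
    ∀ k : Fin K,
      0 < (V.submatrix I id * E * (V.submatrix I id)ᵀ) k k ∧
      θ (I k) = Real.sqrt ((V.submatrix I id * E * (V.submatrix I id)ᵀ) k k) := by
  intro k
  have hθk : θ (I k) ^ 2 = (V.submatrix I id * E * (V.submatrix I id)ᵀ) k k := by
    have h := congrFun₂ hL (I k) (I k)
    rwa [Matrix.mul_assoc _ Pim, Matrix.mul_assoc _ (Pim * P), diagonal_mul_mul_diagonal_apply,
      mul_mul_transpose_apply_of_rows_single Pim Pim P (hpure k) (hpure k), hPdiag, mul_one,
      ← sq, ← mul_mul_transpose_submatrix_apply] at h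
  exact ⟨hθk ▸ pow_pos (hθ _) 2, by rw [← hθk, Real.sqrt_sq (hθ _).le]⟩

/-- If `Θ̃ Π P Π' Θ̃ = V E V'` with `Π` a membership matrix having pure-node
tuple `I` (`Π(I,:) = I_K`), `Θ̃` diagonal positive, and `P` symmetric with unit diagonal,
then for each `k` the `k`-th diagonal entry of `V(I,:) E V(I,:)'` is strictly positive and
`Θ̃(i_k,i_k) = √((V(I,:) E V(I,:)')(k,k))`. -/
theorem thetaTilde_eq_sqrt_diag {n K : ℕ} (hK : 1 ≤ K) (hKn : K ≤ n)
    (Pim : Matrix (Fin n) (Fin K) ℝ)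
    (hnonneg : ∀ i k, 0 ≤ Pim i k)
    (hrowsum : ∀ i, ∑ k, Pim i k = 1)
    (I : Fin K → Fin n)
    (hpure : ∀ k l, Pim (I k) l = if l = k then (1 : ℝ) else 0)
    (θ : Fin n → ℝ) (hθ : ∀ i, 0 < θ i)
    (P : Matrix (Fin K) (Fin K) ℝ) (hPsymm : P.IsSymm) (hPdiag : ∀ k, P k k = 1)
    (V : Matrix (Fin n) (Fin K) ℝ) (E : Matrix (Fin K) (Fin K) ℝ)
    (hL : Matrix.diagonal θ * Pim * P * Pimᵀ * Matrix.diagonal θ = V * E * Vᵀ) :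
    ∀ k : Fin K,
      0 < (V.submatrix I id * E * (V.submatrix I id)ᵀ) k k ∧
      θ (I k) = Real.sqrt ((V.submatrix I id * E * (V.submatrix I id)ᵀ) k k) :=
  thetaTilde_eq_sqrt_diag_general Pim I hpure θ hθ P hPdiag V E hL
end

section
/- Suppose V = Θ̃ Π Θ̃(I,I)^{-1} V(I,:) and V'V = I_K, where Π is a membership matrix with pure-node index tuple I satisfying Π(I,:) = I_K and Θ̃ is diagonal with strictly positive diagonal, and suppose every row of V is nonzero and V(I,:) is invertible. Then the matrix V_{*,1}(I,:) V_{*,1}(I,:)' is invertible, its inverse equals N_V(I,I)^{-1} Θ̃(I,I)^{-1} (Π' Θ̃² Π) Θ̃(I,I)^{-1} N_V(I,I)^{-1}, and every entry of the vector (V_{*,1}(I,:) V_{*,1}(I,:)')^{-1} 𝟏 is strictly positive, where 𝟏 is the all-ones vector in ℝ^K. -/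
/-!
Substituting `V = Θ̃ Π Θ̃(I,I)⁻¹ W` (with `W = V(I,:)`) into `V'V = I` gives `W' B W = I` for
`B = Θ̃(I,I)⁻¹ Π'Θ̃²Π Θ̃(I,I)⁻¹`. A one-sided inverse of a square matrix is two-sided, so
`W W' B = I`, i.e. `(W W')⁻¹ = B`. As `V₊(I,:) = N_V(I,I) W`, the Gram inverse is
`N_V(I,I)⁻¹ B N_V(I,I)⁻¹`: it has nonnegative entries and, since `Π(I,:) = I_K`, a positive
diagonal, so its row sums are positive.
-/

open Matrix

lemma rnorm_pos {m : ℕ} {v : Fin m → ℝ} (hv : v ≠ 0) : 0 < rnorm v := by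
  obtain ⟨j, hj⟩ := Function.ne_iff.mp hv
  exact Real.sqrt_pos.2 <|
    Finset.sum_pos' (fun i _ => sq_nonneg _) ⟨j, Finset.mem_univ _, sq_pos_of_ne_zero hj⟩

lemma rowNormalize_submatrix_s4 {n m p : ℕ} (V : Matrix (Fin n) (Fin m) ℝ) (I : Fin p → Fin n) :
    (rowNormalize V).submatrix I id =
      diagonal (fun k => (rnorm (V (I k)))⁻¹) * V.submatrix I id := by
  ext k j
  simp [rowNormalize, diagonal_mul, div_eq_inv_mul]

variable {ι κ R : Type*}

lemma transpose_mul_self_of_eq_diagonal_mul_mul [Fintype ι] [DecidableEq ι] [Fintype κ]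
    [DecidableEq κ] [CommSemiring R] {V P : Matrix κ ι R} {W : Matrix ι ι R} {θ : κ → R} {a : ι → R}
    (hV : V = diagonal θ * P * (diagonal a * W)) :
    Vᵀ * V = Wᵀ * (diagonal a * (Pᵀ * diagonal (fun i => θ i ^ 2) * P) * diagonal a) * W := by
  have hθ : diagonal (fun i => θ i ^ 2) = diagonal θ * diagonal θ := by
    simp [diagonal_mul_diagonal, sq]
  subst hV
  simp only [transpose_mul, diagonal_transpose, hθ, Matrix.mul_assoc]

lemma diagonal_inv_mul_gram_mul_eq_one [Fintype ι] [DecidableEq ι] [Field R]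
    {W B : Matrix ι ι R} (h : Wᵀ * B * W = 1) {d : ι → R} (hd : ∀ k, d k ≠ 0) :
    (diagonal (fun k => (d k)⁻¹) * W) * (diagonal (fun k => (d k)⁻¹) * W)ᵀ *
      (diagonal d * B * diagonal d) = 1 := by
  have hWB : W * (Wᵀ * B) = 1 := mul_eq_one_comm.mp h
  have hdinv : diagonal (fun k => (d k)⁻¹) * diagonal d = 1 := by
    rw [diagonal_mul_diagonal, ← diagonal_one]
    exact congrArg diagonal (funext fun k => inv_mul_cancel₀ (hd k))
  calc (diagonal (fun k => (d k)⁻¹) * W) * (diagonal (fun k => (d k)⁻¹) * W)ᵀ *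
        (diagonal d * B * diagonal d)
      = diagonal (fun k => (d k)⁻¹) *
          (W * ((Wᵀ * (diagonal (fun k => (d k)⁻¹) * diagonal d)) * B)) * diagonal d := by
        simp only [transpose_mul, diagonal_transpose, Matrix.mul_assoc]
    _ = 1 := by rw [hdinv, Matrix.mul_one, hWB, Matrix.mul_one, hdinv]

lemma transpose_mul_diagonal_mul_self_apply [Fintype κ] [DecidableEq κ] [CommSemiring R]
    (P : Matrix κ ι R) (w : κ → R) (k l : ι) :
    (Pᵀ * diagonal w * P) k l = ∑ i, P i k * w i * P i l := by
  rw [mul_apply]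
  simp only [mul_diagonal, transpose_apply]

section OrderedRing

variable [CommRing R] [LinearOrder R] [IsStrictOrderedRing R]

lemma transpose_mul_diagonal_mul_self_nonneg [Fintype ι] [Fintype κ] [DecidableEq κ]
    {P : Matrix κ ι R} {w : κ → R} (hP : ∀ i k, 0 ≤ P i k) (hw : ∀ i, 0 ≤ w i) (k l : ι) :
    0 ≤ (Pᵀ * diagonal w * P) k l := by
  rw [transpose_mul_diagonal_mul_self_apply]
  exact Finset.sum_nonneg fun i _ => mul_nonneg (mul_nonneg (hP i k) (hw i)) (hP i l)

lemma transpose_mul_diagonal_mul_self_diag_pos [Fintype ι] [Fintype κ] [DecidableEq κ]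
    {P : Matrix κ ι R} {w : κ → R} (hw : ∀ i, 0 < w i) {k : ι} (hk : ∃ i, P i k ≠ 0) :
    0 < (Pᵀ * diagonal w * P) k k := by
  obtain ⟨i, hi⟩ := hk
  rw [transpose_mul_diagonal_mul_self_apply]
  have hterm : ∀ j, P j k * w j * P j k = w j * P j k ^ 2 := fun j => by ring
  simp only [hterm]
  exact Finset.sum_pos' (fun j _ => mul_nonneg (hw j).le (sq_nonneg _))
    ⟨i, Finset.mem_univ _, mul_pos (hw i) (sq_pos_of_ne_zero hi)⟩

lemma diagonal_mul_mul_diagonal_nonneg_s4 [Fintype ι] [DecidableEq ι]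
    {M : Matrix ι ι R} {c e : ι → R}
    (hM : ∀ k l, 0 ≤ M k l) (hc : ∀ k, 0 ≤ c k) (he : ∀ k, 0 ≤ e k) (k l : ι) :
    0 ≤ (diagonal c * M * diagonal e) k l := by
  rw [mul_diagonal, diagonal_mul]
  exact mul_nonneg (mul_nonneg (hc k) (hM k l)) (he l)

lemma diagonal_mul_mul_diagonal_diag_pos [Fintype ι] [DecidableEq ι]
    {M : Matrix ι ι R} {c e : ι → R}
    (hM : ∀ k, 0 < M k k) (hc : ∀ k, 0 < c k) (he : ∀ k, 0 < e k) (k : ι) :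
    0 < (diagonal c * M * diagonal e) k k := by
  rw [mul_diagonal, diagonal_mul]
  exact mul_pos (mul_pos (hc k) (hM k)) (he k)

lemma mulVec_one_pos [Fintype ι] {M : Matrix ι ι R} (hM : ∀ k l, 0 ≤ M k l)
    (hdiag : ∀ k, 0 < M k k) (k : ι) : 0 < (M *ᵥ fun _ => 1) k := by
  simp only [mulVec, dotProduct, mul_one]
  exact Finset.sum_pos' (fun l _ => hM k l) ⟨k, Finset.mem_univ _, hdiag k⟩

end OrderedRing

theorem corner_gram_inverse_pos_general {n K : ℕ}
    (Pim : Matrix (Fin n) (Fin K) ℝ)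
    (hnonneg : ∀ i k, 0 ≤ Pim i k)
    (I : Fin K → Fin n)
    (hpure : ∀ k l, Pim (I k) l = if l = k then (1 : ℝ) else 0)
    (θ : Fin n → ℝ) (hθ : ∀ i, 0 < θ i)
    (V : Matrix (Fin n) (Fin K) ℝ)
    (hVorth : Vᵀ * V = 1)
    (hVdef : V = Matrix.diagonal θ * Pim *
      (Matrix.diagonal (fun k => (θ (I k))⁻¹) * V.submatrix I id))
    (hrows : ∀ i, V i ≠ 0) :
    let Vc := (rowNormalize V).submatrix I id
    IsUnit (Vc * Vcᵀ) ∧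
    (Vc * Vcᵀ)⁻¹ =
      Matrix.diagonal (fun k => rnorm (V (I k))) *
        Matrix.diagonal (fun k => (θ (I k))⁻¹) *
        (Pimᵀ * Matrix.diagonal (fun i => θ i ^ 2) * Pim) *
        Matrix.diagonal (fun k => (θ (I k))⁻¹) *
        Matrix.diagonal (fun k => rnorm (V (I k))) ∧
    ∀ k, 0 < ((Vc * Vcᵀ)⁻¹ *ᵥ fun _ => (1 : ℝ)) k := by
  intro Vc
  set A := diagonal fun k => (θ (I k))⁻¹
  set M := Pimᵀ * diagonal (fun i => θ i ^ 2) * Pim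
  have hr : ∀ k, 0 < rnorm (V (I k)) := fun k => rnorm_pos (hrows (I k))
  have hθI : ∀ k, 0 < (θ (I k))⁻¹ := fun k => inv_pos.2 (hθ (I k))
  have hright : Vc * Vcᵀ * (diagonal (fun k => rnorm (V (I k))) * (A * M * A) *
      diagonal fun k => rnorm (V (I k))) = 1 := by
    rw [show Vc = _ from rowNormalize_submatrix_s4 V I]
    exact diagonal_inv_mul_gram_mul_eq_one
      ((transpose_mul_self_of_eq_diagonal_mul_mul hVdef).symm.trans hVorth) fun k => (hr k).ne'
  have hinv := inv_eq_right_inv hright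
  refine ⟨IsUnit.of_mul_eq_one _ hright, by simp only [hinv, Matrix.mul_assoc], fun k => ?_⟩
  have hMnonneg := transpose_mul_diagonal_mul_self_nonneg hnonneg fun i => sq_nonneg (θ i)
  have hMdiag : ∀ k, 0 < M k k := fun k =>
    transpose_mul_diagonal_mul_self_diag_pos (fun i => pow_pos (hθ i) 2) ⟨I k, by simp [hpure]⟩
  rw [hinv]
  exact mulVec_one_pos
    (diagonal_mul_mul_diagonal_nonneg_s4
      (diagonal_mul_mul_diagonal_nonneg_s4 hMnonneg (fun k => (hθI k).le) fun k => (hθI k).le)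
      (fun k => (hr k).le) fun k => (hr k).le)
    (diagonal_mul_mul_diagonal_diag_pos
      (diagonal_mul_mul_diagonal_diag_pos hMdiag hθI hθI) hr hr) k

/-- Under the ideal setup (`V = Θ̃ Π Θ̃(I,I)⁻¹ V(I,:)`, `V'V = I_K`, rows of
`V` nonzero, `V(I,:)` invertible), the matrix `V₊(I,:) V₊(I,:)'` is invertible, its inverse
equals `N_V(I,I)⁻¹ Θ̃(I,I)⁻¹ (Π' Θ̃² Π) Θ̃(I,I)⁻¹ N_V(I,I)⁻¹`, and every entry of
`(V₊(I,:) V₊(I,:)')⁻¹ 𝟏` is strictly positive. -/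
theorem corner_gram_inverse_pos {n K : ℕ} (hK : 1 ≤ K) (hKn : K ≤ n)
    (Pim : Matrix (Fin n) (Fin K) ℝ)
    (hnonneg : ∀ i k, 0 ≤ Pim i k)
    (hrowsum : ∀ i, ∑ k, Pim i k = 1)
    (I : Fin K → Fin n)
    (hpure : ∀ k l, Pim (I k) l = if l = k then (1 : ℝ) else 0)
    (θ : Fin n → ℝ) (hθ : ∀ i, 0 < θ i)
    (V : Matrix (Fin n) (Fin K) ℝ)
    (hVorth : Vᵀ * V = 1)
    (hVdef : V = Matrix.diagonal θ * Pim *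
      (Matrix.diagonal (fun k => (θ (I k))⁻¹) * V.submatrix I id))
    (hrows : ∀ i, V i ≠ 0)
    (hVI : IsUnit (V.submatrix I id)) :
    let Vc := (rowNormalize V).submatrix I id
    IsUnit (Vc * Vcᵀ) ∧
    (Vc * Vcᵀ)⁻¹ =
      Matrix.diagonal (fun k => rnorm (V (I k))) *
        Matrix.diagonal (fun k => (θ (I k))⁻¹) *
        (Pimᵀ * Matrix.diagonal (fun i => θ i ^ 2) * Pim) *
        Matrix.diagonal (fun k => (θ (I k))⁻¹) *
        Matrix.diagonal (fun k => rnorm (V (I k))) ∧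
    ∀ k, 0 < ((Vc * Vcᵀ)⁻¹ *ᵥ fun _ => (1 : ℝ)) k :=
  corner_gram_inverse_pos_general Pim hnonneg I hpure θ hθ V hVorth hVdef hrows
end

section
/- Let V ∈ ℝ^{n×K} satisfy V'V = I_K with every row of V nonzero, let I = (i_1,…,i_K) be row indices such that V(I,:) is invertible, and set V₂ = V V'. Then: (1) ‖V₂(i,:)‖₂ = ‖V(i,:)‖₂ for every i, i.e. N_{V₂} = N_V; (2) V_{*,2} = V_{*,1} V' and V_{*,2}(I,:) = V_{*,1}(I,:) V'; (3) V_{*,2}(I,:) V_{*,2}(I,:)' = V_{*,1}(I,:) V_{*,1}(I,:)'; (4) V_{*,2} V_{*,2}(I,:)' (V_{*,2}(I,:) V_{*,2}(I,:)')^{-1} = V_{*,1} V_{*,1}(I,:)' (V_{*,1}(I,:) V_{*,1}(I,:)')^{-1}; and (5) V₂ V_{*,2}(I,:)' (V_{*,2}(I,:) V_{*,2}(I,:)')^{-1} = V V_{*,1}(I,:)' (V_{*,1}(I,:) V_{*,1}(I,:)')^{-1}. -/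
/-! `V₂ = V V'` is `V` multiplied on the right by `Q = V'`, whose rows are orthonormal
(`Q Q' = V'V = I`). Right multiplication by such a `Q` preserves the Euclidean norm of every row,
hence commutes with row normalization and with taking the rows `I`; and it cancels in every
product of the form `(A Q)(B Q)' = A B'`. All five identities follow. -/

open Matrix

section RightOrthonormal

variable {n k m : ℕ} {Q : Matrix (Fin k) (Fin m) ℝ}

lemma rnorm_eq_sqrt_mul_transpose_apply (A : Matrix (Fin n) (Fin m) ℝ) (i : Fin n) :
    rnorm (A i) = Real.sqrt ((A * Aᵀ) i i) := by
  simp only [rnorm, mul_apply, transpose_apply, sq]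

lemma mul_transpose_mul_of_mul_transpose_eq_one {l p : ℕ} (hQ : Q * Qᵀ = 1)
    (A : Matrix (Fin l) (Fin k) ℝ) (B : Matrix (Fin p) (Fin k) ℝ) :
    A * Q * (B * Q)ᵀ = A * Bᵀ := by
  rw [transpose_mul, Matrix.mul_assoc, ← Matrix.mul_assoc Q, hQ, Matrix.one_mul]

lemma rnorm_mul_of_mul_transpose_eq_one (hQ : Q * Qᵀ = 1) (A : Matrix (Fin n) (Fin k) ℝ)
    (i : Fin n) : rnorm ((A * Q) i) = rnorm (A i) := by
  rw [rnorm_eq_sqrt_mul_transpose_apply, rnorm_eq_sqrt_mul_transpose_apply,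
    mul_transpose_mul_of_mul_transpose_eq_one hQ]

lemma rowNormalize_mul_of_mul_transpose_eq_one (hQ : Q * Qᵀ = 1)
    (A : Matrix (Fin n) (Fin k) ℝ) : rowNormalize (A * Q) = rowNormalize A * Q := by
  ext i j
  simp only [rowNormalize, of_apply, mul_apply, rnorm_mul_of_mul_transpose_eq_one hQ,
    Finset.sum_div, div_mul_eq_mul_div]

end RightOrthonormal

theorem equivalence_of_normalizations_general {n K : ℕ}
    (V : Matrix (Fin n) (Fin K) ℝ)
    (hVorth : Vᵀ * V = 1)
    (I : Fin K → Fin n) :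
    let V2 := V * Vᵀ
    let S1 := (rowNormalize V).submatrix I id
    let S2 := (rowNormalize V2).submatrix I id
    (∀ i, rnorm (V2 i) = rnorm (V i)) ∧
    (rowNormalize V2 = rowNormalize V * Vᵀ ∧ S2 = S1 * Vᵀ) ∧
    S2 * S2ᵀ = S1 * S1ᵀ ∧
    rowNormalize V2 * S2ᵀ * (S2 * S2ᵀ)⁻¹ = rowNormalize V * S1ᵀ * (S1 * S1ᵀ)⁻¹ ∧
    V2 * S2ᵀ * (S2 * S2ᵀ)⁻¹ = V * S1ᵀ * (S1 * S1ᵀ)⁻¹ := by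
  intro V2 S1 S2
  have hQ : Vᵀ * Vᵀᵀ = 1 := by rwa [transpose_transpose]
  have hV2 : rowNormalize V2 = rowNormalize V * Vᵀ :=
    rowNormalize_mul_of_mul_transpose_eq_one hQ V
  have hS : S2 = S1 * Vᵀ := by
    simp only [S2, hV2]
    rfl
  have hgram : S2 * S2ᵀ = S1 * S1ᵀ := by
    rw [hS, mul_transpose_mul_of_mul_transpose_eq_one hQ]
  refine ⟨rnorm_mul_of_mul_transpose_eq_one hQ V, ⟨hV2, hS⟩, hgram, ?_, ?_⟩
  · rw [hgram, hV2, hS, mul_transpose_mul_of_mul_transpose_eq_one hQ]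
  · rw [hgram, hS, mul_transpose_mul_of_mul_transpose_eq_one hQ]

/-- **Equivalence of the two normalizations.** For `V` with orthonormal columns,
nonzero rows, and invertible corner submatrix `V(I,:)`, setting `V₂ = V V'`:
(1) `‖V₂(i,:)‖ = ‖V(i,:)‖` for all `i` (i.e. `N_{V₂} = N_V`);
(2) `V₂₊ = V₊ V'` and `V₂₊(I,:) = V₊(I,:) V'`;
(3) `V₂₊(I,:) V₂₊(I,:)' = V₊(I,:) V₊(I,:)'`;
(4) `V₂₊ V₂₊(I,:)' (V₂₊(I,:) V₂₊(I,:)')⁻¹ = V₊ V₊(I,:)' (V₊(I,:) V₊(I,:)')⁻¹`;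
(5) `V₂ V₂₊(I,:)' (V₂₊(I,:) V₂₊(I,:)')⁻¹ = V V₊(I,:)' (V₊(I,:) V₊(I,:)')⁻¹`. -/
theorem equivalence_of_normalizations {n K : ℕ} (hK : 1 ≤ K) (hKn : K ≤ n)
    (V : Matrix (Fin n) (Fin K) ℝ)
    (hVorth : Vᵀ * V = 1)
    (hrows : ∀ i, V i ≠ 0)
    (I : Fin K → Fin n)
    (hVI : IsUnit (V.submatrix I id)) :
    let V2 := V * Vᵀ
    let S1 := (rowNormalize V).submatrix I id
    let S2 := (rowNormalize V2).submatrix I id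
    (∀ i, rnorm (V2 i) = rnorm (V i)) ∧
    (rowNormalize V2 = rowNormalize V * Vᵀ ∧ S2 = S1 * Vᵀ) ∧
    S2 * S2ᵀ = S1 * S1ᵀ ∧
    rowNormalize V2 * S2ᵀ * (S2 * S2ᵀ)⁻¹ = rowNormalize V * S1ᵀ * (S1 * S1ᵀ)⁻¹ ∧
    V2 * S2ᵀ * (S2 * S2ᵀ)⁻¹ = V * S1ᵀ * (S1 * S1ᵀ)⁻¹ :=
  equivalence_of_normalizations_general V hVorth I
end

section
/- Suppose V = Θ̃ Π Θ̃(I,I)^{-1} V(I,:) with V'V = I_K, where Π is a rank-K membership matrix with pure-node index tuple I (Π(I,:) = I_K) and Θ̃ is diagonal with diagonal entries θ̃(i) ∈ [θ̃_min, θ̃_max], θ̃_min > 0. Let λ₁(Π'Π) and λ_K(Π'Π) denote the largest and smallest eigenvalues of the positive definite matrix Π'Π. Then for every i ∈ {1,…,n}, θ̃_min/(θ̃_max √(K λ₁(Π'Π))) ≤ ‖V(i,:)‖₂ ≤ θ̃_max/(θ̃_min √(λ_K(Π'Π))). -/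
/-! Write `B = Θ̃Π` and `M = Θ̃(I,I)⁻¹V(I,:)`, so that `V = BM`. Orthonormality `VᵀV = 1` says that
`MMᵀ` inverts the Gram matrix `BᵀB`, and the `i`-th row of `V` has squared norm
`θ̃(i)² πᵢᵀ (BᵀB)⁻¹ πᵢ` with `πᵢ = Π(i,:)`. From `θ̃min² λ_K ‖z‖² ≤ ‖Bz‖² ≤ θ̃max² λ₁ ‖z‖²`
(Rayleigh quotients of `ΠᵀΠ`) and Cauchy–Schwarz, `πᵢᵀ (BᵀB)⁻¹ πᵢ` lies between
`‖πᵢ‖² / (θ̃max² λ₁)` and `‖πᵢ‖² / (θ̃min² λ_K)`, while a membership row has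
`1/K ≤ ‖πᵢ‖² ≤ 1`. Finally `λ_K > 0` because `Π` has the left inverse `MMᵀBᵀΘ̃`. -/

open Matrix

variable {ι m : Type*} [Fintype ι] [Fintype m]

lemma dotProduct_self_nonneg {R : Type*} [Ring R] [LinearOrder R] [IsStrictOrderedRing R]
    (v : ι → R) : 0 ≤ v ⬝ᵥ v :=
  Fintype.sum_nonneg fun i => mul_self_nonneg (v i)

lemma dotProduct_sq_le {R : Type*} [CommRing R] [LinearOrder R] [IsStrictOrderedRing R]
    (u v : ι → R) : (u ⬝ᵥ v) ^ 2 ≤ (u ⬝ᵥ u) * (v ⬝ᵥ v) := by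
  simpa only [dotProduct, sq] using Finset.sum_mul_sq_le_sq_mul_sq Finset.univ u v

lemma dotProduct_mul_self_le_mul {θ y : ι → ℝ} {C : ℝ} (hθ : ∀ j, θ j ^ 2 ≤ C) :
    (θ * y) ⬝ᵥ (θ * y) ≤ C * (y ⬝ᵥ y) := by
  rw [dotProduct, dotProduct, Finset.mul_sum]
  exact Finset.sum_le_sum fun j _ => by
    simpa only [Pi.mul_apply, ← sq, mul_pow] using
      mul_le_mul_of_nonneg_right (hθ j) (sq_nonneg (y j))

lemma mul_le_dotProduct_mul_self {θ y : ι → ℝ} {c : ℝ} (hθ : ∀ j, c ≤ θ j ^ 2) :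
    c * (y ⬝ᵥ y) ≤ (θ * y) ⬝ᵥ (θ * y) := by
  rw [dotProduct, dotProduct, Finset.mul_sum]
  exact Finset.sum_le_sum fun j _ => by
    simpa only [Pi.mul_apply, ← sq, mul_pow] using
      mul_le_mul_of_nonneg_right (hθ j) (sq_nonneg (y j))

lemma Matrix.dotProduct_transpose_mul_mulVec (B : Matrix m ι ℝ) (x y : ι → ℝ) :
    x ⬝ᵥ ((Bᵀ * B) *ᵥ y) = (B *ᵥ x) ⬝ᵥ (B *ᵥ y) := by
  rw [← mulVec_mulVec, dotProduct_mulVec, vecMul_transpose]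

lemma Matrix.diagonal_mul_mulVec [DecidableEq m] (θ : m → ℝ) (A : Matrix m ι ℝ) (z : ι → ℝ) :
    (diagonal θ * A) *ᵥ z = θ * (A *ᵥ z) := by
  ext j
  rw [← mulVec_mulVec, mulVec_diagonal, Pi.mul_apply]

namespace Matrix.IsHermitian

variable [DecidableEq ι] {A : Matrix ι ι ℝ} (hA : A.IsHermitian)

lemma dotProduct_mulVec_eq_sum_eigenvalues (x : ι → ℝ) :
    x ⬝ᵥ (A *ᵥ x) =
      ∑ k, hA.eigenvalues k * (star (hA.eigenvectorUnitary : Matrix ι ι ℝ) *ᵥ x) k ^ 2 := by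
  set U : Matrix ι ι ℝ := ↑hA.eigenvectorUnitary
  have hU : star U = Uᵀ := conjTranspose_eq_transpose_of_trivial U
  conv_lhs => rw [hA.spectral_theorem, Unitary.conjStarAlgAut_apply]
  rw [← mulVec_mulVec, ← mulVec_mulVec, dotProduct_mulVec, hU, ← mulVec_transpose]
  simp only [dotProduct, mulVec_diagonal, Function.comp_apply, RCLike.ofReal_real_eq_id, id, sq]
  exact Finset.sum_congr rfl fun k _ => by ring

lemma dotProduct_self_star_eigenvectorUnitary_mulVec (x : ι → ℝ) :
    (star (hA.eigenvectorUnitary : Matrix ι ι ℝ) *ᵥ x) ⬝ᵥ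
      (star (hA.eigenvectorUnitary : Matrix ι ι ℝ) *ᵥ x) = x ⬝ᵥ x := by
  rw [dotProduct_mulVec, ← mulVec_transpose, mulVec_mulVec, ← conjTranspose_eq_transpose_of_trivial,
    star_eq_conjTranspose, conjTranspose_conjTranspose, ← star_eq_conjTranspose,
    Unitary.mul_star_self_of_mem hA.eigenvectorUnitary.2, one_mulVec]

lemma iInf_eigenvalues_mul_dotProduct_le (x : ι → ℝ) :
    (⨅ k, hA.eigenvalues k) * (x ⬝ᵥ x) ≤ x ⬝ᵥ (A *ᵥ x) := by
  rw [hA.dotProduct_mulVec_eq_sum_eigenvalues, ← hA.dotProduct_self_star_eigenvectorUnitary_mulVec,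
    dotProduct, Finset.mul_sum]
  exact Finset.sum_le_sum fun k _ => by
    rw [← sq]
    exact mul_le_mul_of_nonneg_right (ciInf_le (Set.finite_range _).bddBelow k) (sq_nonneg _)

lemma dotProduct_mulVec_le_iSup_eigenvalues_mul (x : ι → ℝ) :
    x ⬝ᵥ (A *ᵥ x) ≤ (⨆ k, hA.eigenvalues k) * (x ⬝ᵥ x) := by
  rw [hA.dotProduct_mulVec_eq_sum_eigenvalues, ← hA.dotProduct_self_star_eigenvectorUnitary_mulVec,
    dotProduct, Finset.mul_sum]
  exact Finset.sum_le_sum fun k _ => by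
    rw [← sq]
    exact mul_le_mul_of_nonneg_right (le_ciSup (Set.finite_range _).bddAbove k) (sq_nonneg _)

end Matrix.IsHermitian

section DiagonalScaling

variable [DecidableEq m] [DecidableEq ι] {A : Matrix m ι ℝ} (hA : (Aᵀ * A).IsHermitian) {θ : m → ℝ}

lemma Matrix.dotProduct_diagonal_mul_mulVec_le {C : ℝ} (hθ : ∀ j, θ j ^ 2 ≤ C) (hC : 0 ≤ C)
    (z : ι → ℝ) :
    ((diagonal θ * A) *ᵥ z) ⬝ᵥ ((diagonal θ * A) *ᵥ z) ≤
      C * (⨆ k, hA.eigenvalues k) * (z ⬝ᵥ z) := by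
  calc ((diagonal θ * A) *ᵥ z) ⬝ᵥ ((diagonal θ * A) *ᵥ z)
      ≤ C * ((A *ᵥ z) ⬝ᵥ (A *ᵥ z)) := by
        rw [diagonal_mul_mulVec]
        exact dotProduct_mul_self_le_mul hθ
    _ ≤ C * ((⨆ k, hA.eigenvalues k) * (z ⬝ᵥ z)) := by
        rw [← dotProduct_transpose_mul_mulVec]
        exact mul_le_mul_of_nonneg_left (hA.dotProduct_mulVec_le_iSup_eigenvalues_mul z) hC
    _ = C * (⨆ k, hA.eigenvalues k) * (z ⬝ᵥ z) := (mul_assoc _ _ _).symm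

lemma Matrix.le_dotProduct_diagonal_mul_mulVec {c : ℝ} (hθ : ∀ j, c ≤ θ j ^ 2) (hc : 0 ≤ c)
    (z : ι → ℝ) :
    c * (⨅ k, hA.eigenvalues k) * (z ⬝ᵥ z) ≤
      ((diagonal θ * A) *ᵥ z) ⬝ᵥ ((diagonal θ * A) *ᵥ z) := by
  calc c * (⨅ k, hA.eigenvalues k) * (z ⬝ᵥ z) = c * ((⨅ k, hA.eigenvalues k) * (z ⬝ᵥ z)) :=
        mul_assoc _ _ _
    _ ≤ c * ((A *ᵥ z) ⬝ᵥ (A *ᵥ z)) := by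
        rw [← dotProduct_transpose_mul_mulVec]
        exact mul_le_mul_of_nonneg_left (hA.iInf_eigenvalues_mul_dotProduct_le z) hc
    _ ≤ ((diagonal θ * A) *ᵥ z) ⬝ᵥ ((diagonal θ * A) *ᵥ z) := by
        rw [diagonal_mul_mulVec]
        exact mul_le_dotProduct_mul_self hθ

end DiagonalScaling

lemma Matrix.dotProduct_mulVec_eq_of_transpose_mul_mul_eq_one [DecidableEq ι] {B : Matrix m ι ℝ}
    {P : Matrix ι ι ℝ} (hBP : Bᵀ * B * P = 1) (x : ι → ℝ) :
    x ⬝ᵥ (P *ᵥ x) = (B *ᵥ (P *ᵥ x)) ⬝ᵥ (B *ᵥ (P *ᵥ x)) := by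
  rw [← dotProduct_transpose_mul_mulVec, mulVec_mulVec, hBP, one_mulVec, dotProduct_comm]

lemma Matrix.dotProduct_self_le_mul_dotProduct_mulVec [DecidableEq ι] {B : Matrix m ι ℝ}
    {P : Matrix ι ι ℝ} (hBP : Bᵀ * B * P = 1) {C : ℝ}
    (hC : ∀ z, (B *ᵥ z) ⬝ᵥ (B *ᵥ z) ≤ C * (z ⬝ᵥ z)) (x : ι → ℝ) :
    x ⬝ᵥ x ≤ C * (x ⬝ᵥ (P *ᵥ x)) := by
  set u := P *ᵥ x
  rcases (dotProduct_self_nonneg x).eq_or_lt with hx | hx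
  · simp [dotProduct_self_eq_zero.mp hx.symm]
  have hxx : x ⬝ᵥ x = (B *ᵥ x) ⬝ᵥ (B *ᵥ u) := by
    rw [← dotProduct_transpose_mul_mulVec, mulVec_mulVec, hBP, one_mulVec]
  refine le_of_mul_le_mul_left ?_ hx
  calc (x ⬝ᵥ x) * (x ⬝ᵥ x) = (x ⬝ᵥ x) ^ 2 := (sq _).symm
    _ ≤ ((B *ᵥ x) ⬝ᵥ (B *ᵥ x)) * ((B *ᵥ u) ⬝ᵥ (B *ᵥ u)) := hxx ▸ dotProduct_sq_le _ _
    _ ≤ (C * (x ⬝ᵥ x)) * (x ⬝ᵥ u) := by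
      rw [dotProduct_mulVec_eq_of_transpose_mul_mul_eq_one hBP x]
      exact mul_le_mul_of_nonneg_right (hC x) (dotProduct_self_nonneg _)
    _ = (x ⬝ᵥ x) * (C * (x ⬝ᵥ u)) := by ring

lemma Matrix.mul_dotProduct_mulVec_le_dotProduct_self [DecidableEq ι] {B : Matrix m ι ℝ}
    {P : Matrix ι ι ℝ} (hBP : Bᵀ * B * P = 1) {c : ℝ}
    (hc : ∀ z, c * (z ⬝ᵥ z) ≤ (B *ᵥ z) ⬝ᵥ (B *ᵥ z)) (x : ι → ℝ) :
    c * (x ⬝ᵥ (P *ᵥ x)) ≤ x ⬝ᵥ x := by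
  set u := P *ᵥ x
  have hs : x ⬝ᵥ u = (B *ᵥ u) ⬝ᵥ (B *ᵥ u) := dotProduct_mulVec_eq_of_transpose_mul_mul_eq_one hBP x
  have hs0 : 0 ≤ x ⬝ᵥ u := hs ▸ dotProduct_self_nonneg _
  rcases le_or_gt c 0 with hc0 | hc0
  · exact (mul_nonpos_of_nonpos_of_nonneg hc0 hs0).trans (dotProduct_self_nonneg x)
  rcases hs0.eq_or_lt with hs0 | hs0
  · rw [← hs0, mul_zero]
    exact dotProduct_self_nonneg x
  refine le_of_mul_le_mul_left ?_ hs0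
  calc (x ⬝ᵥ u) * (c * (x ⬝ᵥ u)) = c * (x ⬝ᵥ u) ^ 2 := by ring
    _ ≤ c * ((x ⬝ᵥ x) * (u ⬝ᵥ u)) := mul_le_mul_of_nonneg_left (dotProduct_sq_le x u) hc0.le
    _ = (x ⬝ᵥ x) * (c * (u ⬝ᵥ u)) := by ring
    _ ≤ (x ⬝ᵥ x) * (x ⬝ᵥ u) := mul_le_mul_of_nonneg_left (hs ▸ hc u) (dotProduct_self_nonneg x)
    _ = (x ⬝ᵥ u) * (x ⬝ᵥ x) := mul_comm _ _

lemma Matrix.mulVec_injective_of_mul_eq_one {n R : Type*} [Fintype n] [DecidableEq n]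
    [CommRing R] {L : Matrix n m R} {A : Matrix m n R} (h : L * A = 1) :
    Function.Injective A.mulVec :=
  Function.LeftInverse.injective (g := L.mulVec) fun x => by rw [mulVec_mulVec, h, one_mulVec]

open scoped ComplexOrder in
lemma Matrix.PosDef.iInf_eigenvalues_pos {𝕜 : Type*} [RCLike 𝕜] [DecidableEq ι] [Nonempty ι]
    {A : Matrix ι ι 𝕜} (hA : A.PosDef) : 0 < ⨅ k, hA.isHermitian.eigenvalues k := by
  obtain ⟨k, hk⟩ := exists_eq_ciInf_of_finite (f := hA.isHermitian.eigenvalues)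
  exact hk ▸ hA.eigenvalues_pos k

lemma Matrix.transpose_mul_mul_mul_transpose_eq_one [DecidableEq ι] {B : Matrix m ι ℝ}
    {M : Matrix ι ι ℝ} (h : (B * M)ᵀ * (B * M) = 1) : Bᵀ * B * (M * Mᵀ) = 1 := by
  rw [transpose_mul, Matrix.mul_assoc, mul_eq_one_comm] at h
  simpa only [Matrix.mul_assoc] using h

lemma Matrix.row_diagonal_mul_mul_dotProduct_self [DecidableEq m] (θ : m → ℝ) (A : Matrix m ι ℝ)
    (M : Matrix ι ι ℝ) (i : m) :
    (diagonal θ * A * M) i ⬝ᵥ (diagonal θ * A * M) i = θ i ^ 2 * (A i ⬝ᵥ ((M * Mᵀ) *ᵥ A i)) := by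
  have hrow : (diagonal θ * A * M) i = θ i • (A i ᵥ* M) := by
    ext k
    rw [Matrix.mul_assoc, diagonal_mul]
    rfl
  rw [hrow, smul_dotProduct, dotProduct_smul, ← mulVec_mulVec, dotProduct_mulVec,
    mulVec_transpose, smul_eq_mul, smul_eq_mul, ← mul_assoc, sq]

lemma Matrix.row_diagonal_mul_mul_dotProduct_self_bounds [DecidableEq m] [DecidableEq ι]
    {A : Matrix m ι ℝ} (hA : (Aᵀ * A).IsHermitian) {θ : m → ℝ} {a b : ℝ} (ha : 0 ≤ a)
    (hθ : ∀ j, a ≤ θ j ^ 2 ∧ θ j ^ 2 ≤ b) {M : Matrix ι ι ℝ}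
    (hBP : (diagonal θ * A)ᵀ * (diagonal θ * A) * (M * Mᵀ) = 1) (i : m) :
    a * (A i ⬝ᵥ A i) ≤
        b * (⨆ k, hA.eigenvalues k) * ((diagonal θ * A * M) i ⬝ᵥ (diagonal θ * A * M) i) ∧
      a * (⨅ k, hA.eigenvalues k) * ((diagonal θ * A * M) i ⬝ᵥ (diagonal θ * A * M) i) ≤
        b * (A i ⬝ᵥ A i) := by
  have hb : 0 ≤ b := ha.trans ((hθ i).1.trans (hθ i).2)
  have hupper := dotProduct_self_le_mul_dotProduct_mulVec hBP
    (dotProduct_diagonal_mul_mulVec_le hA (fun j => (hθ j).2) hb) (A i)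
  have hlower := mul_dotProduct_mulVec_le_dotProduct_self hBP
    (le_dotProduct_diagonal_mul_mulVec hA (fun j => (hθ j).1) ha) (A i)
  rw [row_diagonal_mul_mul_dotProduct_self]
  constructor
  · calc a * (A i ⬝ᵥ A i) ≤ θ i ^ 2 * (A i ⬝ᵥ A i) :=
          mul_le_mul_of_nonneg_right (hθ i).1 (dotProduct_self_nonneg _)
      _ ≤ θ i ^ 2 * (b * (⨆ k, hA.eigenvalues k) * (A i ⬝ᵥ ((M * Mᵀ) *ᵥ A i))) :=
          mul_le_mul_of_nonneg_left hupper (sq_nonneg _)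
      _ = _ := by ring
  · calc _ = θ i ^ 2 * (a * (⨅ k, hA.eigenvalues k) * (A i ⬝ᵥ ((M * Mᵀ) *ᵥ A i))) := by ring
      _ ≤ θ i ^ 2 * (A i ⬝ᵥ A i) := mul_le_mul_of_nonneg_left hlower (sq_nonneg _)
      _ ≤ b * (A i ⬝ᵥ A i) := mul_le_mul_of_nonneg_right (hθ i).2 (dotProduct_self_nonneg _)

lemma one_le_card_mul_dotProduct_self {π : ι → ℝ} (h : ∑ k, π k = 1) :
    1 ≤ Fintype.card ι * (π ⬝ᵥ π) := by
  simpa [h, dotProduct, sq] using sq_sum_le_card_mul_sum_sq (s := Finset.univ) (f := π)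

lemma dotProduct_self_le_one {π : ι → ℝ} (h0 : ∀ k, 0 ≤ π k) (h1 : ∑ k, π k = 1) :
    π ⬝ᵥ π ≤ 1 := by
  simpa [h1, dotProduct, sq] using
    Finset.sum_sq_le_sq_sum_of_nonneg (s := Finset.univ) fun k _ => h0 k

lemma rnorm_eq_sqrt_dotProduct {m : ℕ} (v : Fin m → ℝ) : rnorm v = √(v ⬝ᵥ v) := by
  simp only [rnorm, dotProduct, sq]

theorem row_norm_bounds_general {n K : ℕ} (hK : 1 ≤ K)
    (Pim : Matrix (Fin n) (Fin K) ℝ)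
    (hnonneg : ∀ i k, 0 ≤ Pim i k)
    (hrowsum : ∀ i, ∑ k, Pim i k = 1)
    (I : Fin K → Fin n)
    (θ : Fin n → ℝ) (θmin θmax : ℝ) (hθmin : 0 < θmin)
    (hθ : ∀ i, θmin ≤ θ i ∧ θ i ≤ θmax)
    (V : Matrix (Fin n) (Fin K) ℝ)
    (hVorth : Vᵀ * V = 1)
    (hVdef : V = Matrix.diagonal θ * Pim *
      (Matrix.diagonal (fun k => (θ (I k))⁻¹) * V.submatrix I id))
    (hH : (Pimᵀ * Pim).IsHermitian) :
    ∀ i : Fin n,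
      θmin / (θmax * Real.sqrt (K * ⨆ k, hH.eigenvalues k)) ≤ rnorm (V i) ∧
      rnorm (V i) ≤ θmax / (θmin * Real.sqrt (⨅ k, hH.eigenvalues k)) := by
  intro i
  set M := Matrix.diagonal (fun k => (θ (I k))⁻¹) * V.submatrix I id
  have hBP : (diagonal θ * Pim)ᵀ * (diagonal θ * Pim) * (M * Mᵀ) = 1 :=
    transpose_mul_mul_mul_transpose_eq_one (hVdef ▸ hVorth)
  have : Nonempty (Fin K) := ⟨⟨0, hK⟩⟩
  have hPD : (Pimᵀ * Pim).PosDef := by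
    refine (conjTranspose_eq_transpose_of_trivial Pim) ▸ PosDef.conjTranspose_mul_self Pim
      (mulVec_injective_of_mul_eq_one (L := M * Mᵀ * (diagonal θ * Pim)ᵀ * diagonal θ) ?_)
    simpa only [Matrix.mul_assoc] using mul_eq_one_comm.mp hBP
  have heigmin : 0 < ⨅ k, hH.eigenvalues k := hPD.iInf_eigenvalues_pos
  have heigmax : 0 < ⨆ k, hH.eigenvalues k :=
    heigmin.trans_le (ciInf_le_ciSup (Set.finite_range _).bddBelow (Set.finite_range _).bddAbove)
  have hθmax : 0 < θmax := hθmin.trans_le ((hθ i).1.trans (hθ i).2)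
  obtain ⟨hupper, hlower⟩ := row_diagonal_mul_mul_dotProduct_self_bounds hH (sq_nonneg θmin)
    (fun j => ⟨pow_le_pow_left₀ hθmin.le (hθ j).1 2,
      pow_le_pow_left₀ (hθmin.le.trans (hθ j).1) (hθ j).2 2⟩) hBP i
  have hK1 := one_le_card_mul_dotProduct_self (hrowsum i)
  rw [Fintype.card_fin] at hK1
  have ht1 := dotProduct_self_le_one (hnonneg i) (hrowsum i)
  rw [rnorm_eq_sqrt_dotProduct, hVdef]
  constructor
  · rw [Real.le_sqrt (by positivity) (dotProduct_self_nonneg _), div_pow, mul_pow,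
      Real.sq_sqrt (by positivity), div_le_iff₀ (by positivity)]
    nlinarith
  · rw [Real.sqrt_le_left (by positivity), div_pow, mul_pow, Real.sq_sqrt heigmin.le,
      le_div_iff₀ (by positivity)]
    nlinarith

/-- **delocalization of population eigenvectors.** Under the ideal setup, with
`Θ̃`'s diagonal entries in `[θmin, θmax]` (`θmin > 0`), every row of `V` satisfies
`θmin/(θmax √(K λ₁(Π'Π))) ≤ ‖V(i,:)‖ ≤ θmax/(θmin √(λ_K(Π'Π)))`, where `λ₁` and `λ_K`
are the largest and smallest eigenvalues of `Π'Π`. -/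
theorem row_norm_bounds {n K : ℕ} (hK : 1 ≤ K) (hKn : K ≤ n)
    (Pim : Matrix (Fin n) (Fin K) ℝ)
    (hnonneg : ∀ i k, 0 ≤ Pim i k)
    (hrowsum : ∀ i, ∑ k, Pim i k = 1)
    (hrank : Pim.rank = K)
    (I : Fin K → Fin n)
    (hpure : ∀ k l, Pim (I k) l = if l = k then (1 : ℝ) else 0)
    (θ : Fin n → ℝ) (θmin θmax : ℝ) (hθmin : 0 < θmin)
    (hθ : ∀ i, θmin ≤ θ i ∧ θ i ≤ θmax)
    (V : Matrix (Fin n) (Fin K) ℝ)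
    (hVorth : Vᵀ * V = 1)
    (hVdef : V = Matrix.diagonal θ * Pim *
      (Matrix.diagonal (fun k => (θ (I k))⁻¹) * V.submatrix I id))
    (hH : (Pimᵀ * Pim).IsHermitian) :
    ∀ i : Fin n,
      θmin / (θmax * Real.sqrt (K * ⨆ k, hH.eigenvalues k)) ≤ rnorm (V i) ∧
      rnorm (V i) ≤ θmax / (θmin * Real.sqrt (⨅ k, hH.eigenvalues k)) :=
  row_norm_bounds_general hK Pim hnonneg hrowsum I θ θmin θmax hθmin hθ V hVorth hVdef hH
end

section
/- Suppose V = Θ̃ Π B with V'V = I_K, where B = Θ̃(I,I)^{-1} V(I,:) is invertible, Π is a rank-K membership matrix with pure-node index tuple I (Π(I,:) = I_K), and Θ̃ is diagonal with strictly positive diagonal. Then B B' = (Π' Θ̃² Π)^{-1}; equivalently, (Θ̃(I,I)^{-1} V(I,:))(Θ̃(I,I)^{-1} V(I,:))' is the inverse of the positive definite matrix Π' Θ̃² Π. -/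
/-!
Substituting `V = Θ̃ Π B` into `V'V = I` gives `B' (Π' Θ̃² Π) B = I`. A one-sided inverse of a
square matrix is two-sided, so this yields `(Π' Θ̃² Π) (B B') = I`.
-/

open Matrix

namespace Matrix

variable {m n k R : Type*} [Fintype n] [CommRing R]

theorem isUnit_and_mul_transpose_eq_inv_of_transpose_mul_mul_eq_one [DecidableEq n]
    {A B : Matrix n n R} (h : Bᵀ * A * B = 1) : IsUnit A ∧ B * Bᵀ = A⁻¹ := by
  have hAB : A * (B * Bᵀ) = 1 := by
    rw [← Matrix.mul_assoc]
    exact mul_eq_one_comm.mp (by rwa [← Matrix.mul_assoc])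
  exact ⟨(isUnit_iff_isUnit_det A).mpr (isUnit_det_of_right_inverse hAB),
    (inv_eq_right_inv hAB).symm⟩

theorem transpose_mul_self_diagonal_mul_mul [Fintype m] [DecidableEq m] [Fintype k]
    (d : m → R) (P : Matrix m n R) (B : Matrix n k R) :
    (diagonal d * P * B)ᵀ * (diagonal d * P * B) =
      Bᵀ * (Pᵀ * diagonal (fun i => d i ^ 2) * P) * B := by
  simp only [transpose_mul, diagonal_transpose, Matrix.mul_assoc, sq]
  rw [← diagonal_mul_diagonal]
  simp only [Matrix.mul_assoc]

end Matrix

theorem BBt_eq_inverse_gram_general {n K : ℕ}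
    (Pim : Matrix (Fin n) (Fin K) ℝ)
    (I : Fin K → Fin n)
    (θ : Fin n → ℝ)
    (V : Matrix (Fin n) (Fin K) ℝ)
    (hVorth : Vᵀ * V = 1)
    (hVdef : V = Matrix.diagonal θ * Pim *
      (Matrix.diagonal (fun k => (θ (I k))⁻¹) * V.submatrix I id)) :
    IsUnit (Pimᵀ * Matrix.diagonal (fun i => θ i ^ 2) * Pim) ∧
    (Matrix.diagonal (fun k => (θ (I k))⁻¹) * V.submatrix I id) *
        (Matrix.diagonal (fun k => (θ (I k))⁻¹) * V.submatrix I id)ᵀ =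
      (Pimᵀ * Matrix.diagonal (fun i => θ i ^ 2) * Pim)⁻¹ := by
  refine isUnit_and_mul_transpose_eq_inv_of_transpose_mul_mul_eq_one ?_
  rw [← transpose_mul_self_diagonal_mul_mul, ← hVdef, hVorth]

/-- If `V = Θ̃ Π B` with `V'V = I_K` and `B = Θ̃(I,I)⁻¹ V(I,:)` invertible,
`Π` a rank-`K` membership matrix with pure tuple `I`, `Θ̃` diagonal positive, then
`Π' Θ̃² Π` is invertible and `B B' = (Π' Θ̃² Π)⁻¹`. -/
theorem BBt_eq_inverse_gram {n K : ℕ} (hK : 1 ≤ K) (hKn : K ≤ n)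
    (Pim : Matrix (Fin n) (Fin K) ℝ)
    (hnonneg : ∀ i k, 0 ≤ Pim i k)
    (hrowsum : ∀ i, ∑ k, Pim i k = 1)
    (hrank : Pim.rank = K)
    (I : Fin K → Fin n)
    (hpure : ∀ k l, Pim (I k) l = if l = k then (1 : ℝ) else 0)
    (θ : Fin n → ℝ) (hθ : ∀ i, 0 < θ i)
    (V : Matrix (Fin n) (Fin K) ℝ)
    (hVorth : Vᵀ * V = 1)
    (hB : IsUnit (Matrix.diagonal (fun k => (θ (I k))⁻¹) * V.submatrix I id))
    (hVdef : V = Matrix.diagonal θ * Pim *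
      (Matrix.diagonal (fun k => (θ (I k))⁻¹) * V.submatrix I id)) :
    IsUnit (Pimᵀ * Matrix.diagonal (fun i => θ i ^ 2) * Pim) ∧
    (Matrix.diagonal (fun k => (θ (I k))⁻¹) * V.submatrix I id) *
        (Matrix.diagonal (fun k => (θ (I k))⁻¹) * V.submatrix I id)ᵀ =
      (Pimᵀ * Matrix.diagonal (fun i => θ i ^ 2) * Pim)⁻¹ :=
  BBt_eq_inverse_gram_general Pim I θ V hVorth hVdef
end

section
/- Let ℒ = Θ̃ Π P Π' Θ̃ where Π ∈ ℝ^{n×K} has rank K, P ∈ ℝ^{K×K} is symmetric and invertible, and Θ̃ is diagonal with diagonal entries ≥ θ̃_min > 0. Then ℒ is a symmetric matrix of rank K, and its K-th largest singular value (equivalently, the smallest absolute value among its K nonzero eigenvalues) satisfies σ_K(ℒ) ≥ θ̃_min² · σ_min(P) · λ_K(Π'Π), where σ_min(P) is the smallest singular value of P and λ_K(Π'Π) is the smallest eigenvalue of the positive definite matrix Π'Π. -/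
/-!
Write `ℒ = A P Aᵀ` with `A = Θ̃ Π`, which has full column rank because `Θ̃` is invertible.
Then `AᵀA` is invertible and `Aᵀ ℒ A = (AᵀA) P (AᵀA)`, so `rank ℒ = K`. If `ℒ v = μ v` with
`μ ≠ 0`, then `w = μ⁻¹ P Aᵀ v` satisfies `A w = v`, hence `P (AᵀA) w = μ w` with `w ≠ 0`.
Since `wᵀ AᵀA w = ‖Θ̃ Π w‖² ≥ θ̃_min² λ_K(Π'Π) ‖w‖²`, Cauchy–Schwarz gives
`‖AᵀA w‖ ≥ θ̃_min² λ_K(Π'Π) ‖w‖`, and `|μ| ‖w‖ = ‖P (AᵀA w)‖ ≥ σ_min(P) ‖AᵀA w‖`.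
-/

open Matrix

namespace Matrix

variable {ι m R : Type*} [Fintype ι] [Fintype m]

lemma dotProduct_transpose_mul_self_mulVec [CommSemiring R] (A : Matrix m ι R) (x : ι → R) :
    x ⬝ᵥ ((Aᵀ * A) *ᵥ x) = (A *ᵥ x) ⬝ᵥ (A *ᵥ x) := by
  rw [← mulVec_mulVec, dotProduct_transpose_mulVec, dotProduct_comm]

lemma sq_dotProduct_le_dotProduct_self_mul (x y : ι → ℝ) :
    (x ⬝ᵥ y) ^ 2 ≤ (x ⬝ᵥ x) * (y ⬝ᵥ y) := by
  simpa only [dotProduct, sq] using Finset.sum_mul_sq_le_sq_mul_sq Finset.univ x y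

lemma mul_dotProduct_self_le_diagonal_mulVec [DecidableEq ι] {θ : ι → ℝ} {c : ℝ}
    (hc : ∀ i, c ≤ θ i ^ 2) (x : ι → ℝ) :
    c * (x ⬝ᵥ x) ≤ (diagonal θ *ᵥ x) ⬝ᵥ (diagonal θ *ᵥ x) := by
  simp only [dotProduct, mulVec_diagonal, Finset.mul_sum]
  exact Finset.sum_le_sum fun i _ => by nlinarith [hc i, mul_self_nonneg (x i)]

lemma isUnit_of_rank_eq_card [DecidableEq ι] [Field R] {G : Matrix ι ι R}
    (h : G.rank = Fintype.card ι) : IsUnit G := by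
  rw [← mulVec_surjective_iff_isUnit, ← coe_mulVecLin, ← LinearMap.range_eq_top]
  exact Submodule.eq_top_of_finrank_eq (by rw [← rank, h, Module.finrank_fintype_fun_eq_card])

theorem rank_mul_mul_transpose_of_rank_eq_card [DecidableEq ι] [Field R] [LinearOrder R]
    [IsStrictOrderedRing R] {A : Matrix m ι R} {P : Matrix ι ι R}
    (hA : A.rank = Fintype.card ι) (hP : IsUnit P) :
    (A * P * Aᵀ).rank = Fintype.card ι := by
  have hG : IsUnit (Aᵀ * A).det :=
    (isUnit_iff_isUnit_det _).mp (isUnit_of_rank_eq_card (by rw [rank_transpose_mul_self, hA]))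
  have hsandwich : Aᵀ * (A * P * Aᵀ) * A = (Aᵀ * A) * P * (Aᵀ * A) := by
    simp only [Matrix.mul_assoc]
  refine le_antisymm ((rank_mul_le_left _ _).trans ((rank_mul_le_left _ _).trans hA.le)) ?_
  calc Fintype.card ι = ((Aᵀ * A) * P * (Aᵀ * A)).rank := by
        rw [rank_mul_eq_left_of_isUnit_det _ _ hG, rank_mul_eq_right_of_isUnit_det _ _ hG,
          rank_of_isUnit P hP]
    _ = (Aᵀ * (A * P * Aᵀ) * A).rank := by rw [hsandwich]
    _ ≤ (A * P * Aᵀ).rank := (rank_mul_le_left _ _).trans (rank_mul_le_right _ _)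

lemma exists_ne_zero_mulVec_transpose_mul_self_mulVec_eq_smul [Field R]
    {A : Matrix m ι R} {P : Matrix ι ι R} {μ : R} {v : m → R} (hv : v ≠ 0) (hμ : μ ≠ 0)
    (h : (A * P * Aᵀ) *ᵥ v = μ • v) :
    ∃ w ≠ 0, P *ᵥ ((Aᵀ * A) *ᵥ w) = μ • w := by
  set w := μ⁻¹ • P *ᵥ (Aᵀ *ᵥ v)
  have hAw : A *ᵥ w = v := by
    rw [mulVec_smul, mulVec_mulVec, mulVec_mulVec, h, smul_smul, inv_mul_cancel₀ hμ, one_smul]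
  refine ⟨w, fun hw => hv (by rw [← hAw, hw, mulVec_zero]), ?_⟩
  rw [← mulVec_mulVec, hAw, smul_smul, mul_inv_cancel₀ hμ, one_smul]

namespace IsHermitian

variable [DecidableEq ι] {M : Matrix ι ι ℝ} (hM : M.IsHermitian)

lemma exists_eigencoordinates (x : ι → ℝ) :
    ∃ y : ι → ℝ, x ⬝ᵥ x = ∑ j, y j ^ 2 ∧
      x ⬝ᵥ (M *ᵥ x) = ∑ j, hM.eigenvalues j * y j ^ 2 ∧
      (M *ᵥ x) ⬝ᵥ (M *ᵥ x) = ∑ j, (hM.eigenvalues j * y j) ^ 2 := by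
  set U : Matrix ι ι ℝ := (hM.eigenvectorUnitary : Matrix ι ι ℝ)
  have hUU : Uᵀ * U = 1 := by
    rw [← conjTranspose_eq_transpose_of_trivial, ← star_eq_conjTranspose]
    exact mem_unitaryGroup_iff'.mp hM.eigenvectorUnitary.2
  have hUUt : U * Uᵀ = 1 := mul_eq_one_comm.mp hUU
  have hU : ∀ a b, (U *ᵥ a) ⬝ᵥ (U *ᵥ b) = a ⬝ᵥ b := fun a b => by
    rw [dotProduct_mulVec, ← vecMul_transpose, vecMul_vecMul, hUU, vecMul_one]
  have hM' : M = U * diagonal hM.eigenvalues * Uᵀ := by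
    conv_lhs => rw [hM.spectral_theorem]
    rw [Unitary.conjStarAlgAut_apply, star_eq_conjTranspose, conjTranspose_eq_transpose_of_trivial]
    rfl
  set y := Uᵀ *ᵥ x
  have hx : x = U *ᵥ y := by rw [mulVec_mulVec, hUUt, one_mulVec]
  have hMx : M *ᵥ x = U *ᵥ (diagonal hM.eigenvalues *ᵥ y) := by
    conv_lhs => rw [hM']
    simp only [y, mulVec_mulVec, Matrix.mul_assoc]
  refine ⟨y, ?_, ?_, ?_⟩
  · rw [hx, hU]; simp only [dotProduct, sq]
  · rw [hMx, hx, hU]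
    exact Finset.sum_congr rfl fun j _ => by rw [mulVec_diagonal]; ring
  · rw [hMx, hU]
    exact Finset.sum_congr rfl fun j _ => by rw [mulVec_diagonal]; ring

lemma iInf_eigenvalues_mul_dotProduct_self_le (x : ι → ℝ) :
    (⨅ j, hM.eigenvalues j) * (x ⬝ᵥ x) ≤ x ⬝ᵥ (M *ᵥ x) := by
  obtain ⟨y, hxx, hxMx, -⟩ := hM.exists_eigencoordinates x
  rw [hxx, hxMx, Finset.mul_sum]
  exact Finset.sum_le_sum fun j _ =>
    mul_le_mul_of_nonneg_right (ciInf_le (Finite.bddBelow_range _) j) (sq_nonneg _)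

lemma sq_iInf_abs_eigenvalues_mul_dotProduct_self_le (x : ι → ℝ) :
    (⨅ j, |hM.eigenvalues j|) ^ 2 * (x ⬝ᵥ x) ≤ (M *ᵥ x) ⬝ᵥ (M *ᵥ x) := by
  obtain ⟨y, hxx, -, hMxMx⟩ := hM.exists_eigencoordinates x
  rw [hxx, hMxMx, Finset.mul_sum]
  refine Finset.sum_le_sum fun j _ => ?_
  have hle : (⨅ j, |hM.eigenvalues j|) ^ 2 ≤ hM.eigenvalues j ^ 2 := by
    rw [← sq_abs (hM.eigenvalues j)]
    exact pow_le_pow_left₀ (Real.iInf_nonneg fun _ => abs_nonneg _)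
      (ciInf_le (Finite.bddBelow_range _) j) 2
  rw [mul_pow]
  exact mul_le_mul_of_nonneg_right hle (sq_nonneg _)

lemma mul_iInf_abs_eigenvalues_le_abs_of_mulVec_mulVec_eq_smul {G : Matrix ι ι ℝ} {a μ : ℝ}
    {w : ι → ℝ} (hG : ∀ x, a * (x ⬝ᵥ x) ≤ x ⬝ᵥ (G *ᵥ x)) (hw : w ≠ 0)
    (h : M *ᵥ (G *ᵥ w) = μ • w) :
    a * (⨅ j, |hM.eigenvalues j|) ≤ |μ| := by
  set σ := ⨅ j, |hM.eigenvalues j|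
  have hσ : 0 ≤ σ := Real.iInf_nonneg fun _ => abs_nonneg _
  rcases lt_or_ge a 0 with ha | ha
  · exact (mul_nonpos_of_nonpos_of_nonneg ha.le hσ).trans (abs_nonneg μ)
  set g := G *ᵥ w
  set q := w ⬝ᵥ w
  have hq : 0 < q := lt_of_le_of_ne (Finset.sum_nonneg fun _ _ => mul_self_nonneg _)
    fun h0 => hw (dotProduct_self_eq_zero.mp h0.symm)
  have hGw : a * q ≤ w ⬝ᵥ g := hG w
  have hMg : σ ^ 2 * (g ⬝ᵥ g) ≤ μ ^ 2 * q := by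
    have := hM.sq_iInf_abs_eigenvalues_mul_dotProduct_self_le g
    rwa [h, smul_dotProduct, dotProduct_smul, smul_eq_mul, smul_eq_mul, ← mul_assoc, ← sq]
      at this
  have hsq : (a * σ) ^ 2 * q ^ 2 ≤ μ ^ 2 * q ^ 2 := calc
    (a * σ) ^ 2 * q ^ 2 = σ ^ 2 * (a * q) ^ 2 := by ring
    _ ≤ σ ^ 2 * (w ⬝ᵥ g) ^ 2 := by gcongr
    _ ≤ σ ^ 2 * (q * (g ⬝ᵥ g)) := by gcongr; exact sq_dotProduct_le_dotProduct_self_mul w g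
    _ = q * (σ ^ 2 * (g ⬝ᵥ g)) := by ring
    _ ≤ q * (μ ^ 2 * q) := by gcongr
    _ = μ ^ 2 * q ^ 2 := by ring
  exact (le_abs_self _).trans (sq_le_sq.mp (le_of_mul_le_mul_right hsq (by positivity)))

end IsHermitian

lemma IsHermitian.mul_iInf_eigenvalues_mul_dotProduct_self_le_diagonal_mul [DecidableEq ι]
    [DecidableEq m] {B : Matrix m ι ℝ} (hB : (Bᵀ * B).IsHermitian) {θ : m → ℝ} {c : ℝ}
    (hc0 : 0 ≤ c) (hc : ∀ i, c ≤ θ i ^ 2) (x : ι → ℝ) :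
    c * (⨅ j, hB.eigenvalues j) * (x ⬝ᵥ x) ≤
      x ⬝ᵥ (((diagonal θ * B)ᵀ * (diagonal θ * B)) *ᵥ x) := calc
  _ = c * ((⨅ j, hB.eigenvalues j) * (x ⬝ᵥ x)) := by ring
  _ ≤ c * ((B *ᵥ x) ⬝ᵥ (B *ᵥ x)) := by
    rw [← dotProduct_transpose_mul_self_mulVec]
    gcongr
    exact hB.iInf_eigenvalues_mul_dotProduct_self_le x
  _ ≤ (diagonal θ *ᵥ (B *ᵥ x)) ⬝ᵥ (diagonal θ *ᵥ (B *ᵥ x)) :=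
    mul_dotProduct_self_le_diagonal_mulVec hc _
  _ = _ := by rw [dotProduct_transpose_mul_self_mulVec, mulVec_mulVec]

end Matrix

theorem smallest_nonzero_singular_value_bound_general {n K : ℕ}
    (Pim : Matrix (Fin n) (Fin K) ℝ)
    (hrank : Pim.rank = K)
    (θ : Fin n → ℝ) (θmin : ℝ) (hθmin : 0 < θmin) (hθ : ∀ i, θmin ≤ θ i)
    (P : Matrix (Fin K) (Fin K) ℝ) (hPunit : IsUnit P)
    (hHP : P.IsHermitian)
    (hH : (Pimᵀ * Pim).IsHermitian)
    (hHL : (Matrix.diagonal θ * Pim * P * Pimᵀ * Matrix.diagonal θ).IsHermitian) :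
    (Matrix.diagonal θ * Pim * P * Pimᵀ * Matrix.diagonal θ).IsSymm ∧
    (Matrix.diagonal θ * Pim * P * Pimᵀ * Matrix.diagonal θ).rank = K ∧
    ∀ i : Fin n, hHL.eigenvalues i ≠ 0 →
      θmin ^ 2 * (⨅ j, |hHP.eigenvalues j|) * (⨅ j, hH.eigenvalues j) ≤
        |hHL.eigenvalues i| := by
  set A := diagonal θ * Pim
  have hL : diagonal θ * Pim * P * Pimᵀ * diagonal θ = A * P * Aᵀ := by
    simp only [A, transpose_mul, diagonal_transpose, Matrix.mul_assoc]
  have hθ0 : IsUnit (diagonal θ).det := by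
    rw [det_diagonal]
    exact (Finset.prod_pos fun i _ => hθmin.trans_le (hθ i)).ne'.isUnit
  have hA : A.rank = Fintype.card (Fin K) := by
    rw [rank_mul_eq_right_of_isUnit_det _ _ hθ0, hrank, Fintype.card_fin]
  have hAA : ∀ x, θmin ^ 2 * (⨅ j, hH.eigenvalues j) * (x ⬝ᵥ x) ≤ x ⬝ᵥ ((Aᵀ * A) *ᵥ x) :=
    hH.mul_iInf_eigenvalues_mul_dotProduct_self_le_diagonal_mul (sq_nonneg θmin)
      fun i => pow_le_pow_left₀ hθmin.le (hθ i) 2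
  refine ⟨?_, ?_, fun i hi => ?_⟩
  · rw [IsSymm, ← conjTranspose_eq_transpose_of_trivial]
    exact hHL
  · rw [hL, rank_mul_mul_transpose_of_rank_eq_card hA hPunit, Fintype.card_fin]
  · have hv : ⇑(hHL.eigenvectorBasis i) ≠ 0 := fun h0 =>
      hHL.eigenvectorBasis.orthonormal.ne_zero i (by ext j; exact congrFun h0 j)
    obtain ⟨w, hw, hPw⟩ := exists_ne_zero_mulVec_transpose_mul_self_mulVec_eq_smul (A := A)
      (P := P) hv hi (by rw [← hL]; exact hHL.mulVec_eigenvectorBasis i)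
    calc θmin ^ 2 * (⨅ j, |hHP.eigenvalues j|) * (⨅ j, hH.eigenvalues j)
        = θmin ^ 2 * (⨅ j, hH.eigenvalues j) * (⨅ j, |hHP.eigenvalues j|) := by ring
      _ ≤ |hHL.eigenvalues i| :=
        hHP.mul_iInf_abs_eigenvalues_le_abs_of_mulVec_mulVec_eq_smul hAA hw hPw

/-- **lower bound for the smallest nonzero singular value of `ℒ`.**
For `ℒ = Θ̃ Π P Π' Θ̃` with `rank Π = K`, `P` symmetric invertible and `Θ̃` diagonal with
entries `≥ θmin > 0`, `ℒ` is symmetric of rank `K` and every nonzero eigenvalue `μ` of `ℒ`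
satisfies `|μ| ≥ θmin² · σmin(P) · λ_K(Π'Π)`, where `σmin(P)` is the smallest singular value
of the symmetric matrix `P` (the smallest `|eigenvalue|`) and `λ_K(Π'Π)` the smallest
eigenvalue of `Π'Π`. This expresses `σ_K(ℒ) ≥ θmin² σmin(P) λ_K(Π'Π)`. -/
theorem smallest_nonzero_singular_value_bound {n K : ℕ} (hK : 1 ≤ K) (hKn : K ≤ n)
    (Pim : Matrix (Fin n) (Fin K) ℝ)
    (hnonneg : ∀ i k, 0 ≤ Pim i k)
    (hrowsum : ∀ i, ∑ k, Pim i k = 1)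
    (hrank : Pim.rank = K)
    (θ : Fin n → ℝ) (θmin : ℝ) (hθmin : 0 < θmin) (hθ : ∀ i, θmin ≤ θ i)
    (P : Matrix (Fin K) (Fin K) ℝ) (hPsymm : P.IsSymm) (hPunit : IsUnit P)
    (hHP : P.IsHermitian)
    (hH : (Pimᵀ * Pim).IsHermitian)
    (hHL : (Matrix.diagonal θ * Pim * P * Pimᵀ * Matrix.diagonal θ).IsHermitian) :
    (Matrix.diagonal θ * Pim * P * Pimᵀ * Matrix.diagonal θ).IsSymm ∧
    (Matrix.diagonal θ * Pim * P * Pimᵀ * Matrix.diagonal θ).rank = K ∧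
    ∀ i : Fin n, hHL.eigenvalues i ≠ 0 →
      θmin ^ 2 * (⨅ j, |hHP.eigenvalues j|) * (⨅ j, hH.eigenvalues j) ≤
        |hHL.eigenvalues i| :=
  smallest_nonzero_singular_value_bound_general Pim hrank θ θmin hθmin hθ P hPunit hHP hH hHL
end

section
/- Let V, V̂ ∈ ℝ^{n×K} each have orthonormal columns (V'V = I_K and V̂'V̂ = I_K), and let O ∈ ℝ^{K×K} be any orthogonal matrix. Then ‖V̂V̂' − VV'‖_{2→∞} ≤ ‖V − V̂O‖_{2→∞} + (‖V − V̂O‖_{2→∞} + ‖V‖_{2→∞}) · ‖V − V̂O‖_F, where ‖M‖_{2→∞} = max_i ‖M(i,:)‖₂ is the maximum row ℓ₂-norm and ‖·‖_F is the Frobenius norm. -/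
open Matrix

/-- The two-to-infinity norm of a matrix: the maximum ℓ₂-norm of its rows. -/
noncomputable def twoToInfNorm {n m : ℕ} (M : Matrix (Fin n) (Fin m) ℝ) : ℝ :=
  ⨆ i, rnorm (M i)

/-- The Frobenius norm of a matrix. -/
noncomputable def frobNorm {n m : ℕ} (M : Matrix (Fin n) (Fin m) ℝ) : ℝ :=
  Real.sqrt (∑ i, ∑ j, M i j ^ 2)

lemma rnorm_neg {m : ℕ} (v : Fin m → ℝ) : rnorm (-v) = rnorm v := by
  simp [rnorm]

lemma rnorm_add_le {m : ℕ} (u v : Fin m → ℝ) : rnorm (u + v) ≤ rnorm u + rnorm v := by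
  simpa only [rnorm_eq_norm, WithLp.toLp_add] using norm_add_le _ _

lemma rnorm_sub_le {m : ℕ} (u v : Fin m → ℝ) : rnorm (u - v) ≤ rnorm u + rnorm v := by
  simpa only [rnorm_eq_norm, WithLp.toLp_sub] using norm_sub_le _ _

lemma rnorm_eq_sqrt_mul_transpose {n m : ℕ} (A : Matrix (Fin n) (Fin m) ℝ) (i : Fin n) :
    rnorm (A i) = Real.sqrt ((A * Aᵀ) i i) := by
  simp [rnorm, mul_apply, sq]

lemma frobNorm_nonneg {n m : ℕ} (M : Matrix (Fin n) (Fin m) ℝ) : 0 ≤ frobNorm M :=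
  Real.sqrt_nonneg _

lemma twoToInfNorm_nonneg {n m : ℕ} (M : Matrix (Fin n) (Fin m) ℝ) : 0 ≤ twoToInfNorm M :=
  Real.iSup_nonneg fun _ => rnorm_nonneg _

lemma rnorm_le_twoToInfNorm {n m : ℕ} (M : Matrix (Fin n) (Fin m) ℝ) (i : Fin n) :
    rnorm (M i) ≤ twoToInfNorm M :=
  le_ciSup (f := fun i => rnorm (M i)) (Set.finite_range _).bddAbove i

lemma rnorm_mul_transpose_le {n p m : ℕ} (A : Matrix (Fin n) (Fin m) ℝ)
    (B : Matrix (Fin p) (Fin m) ℝ) (i : Fin n) :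
    rnorm ((A * Bᵀ) i) ≤ rnorm (A i) * frobNorm B := by
  have hsq : ∑ j, (A * Bᵀ) i j ^ 2 ≤ (∑ k, A i k ^ 2) * ∑ j, ∑ k, B j k ^ 2 := by
    rw [Finset.mul_sum]
    refine Finset.sum_le_sum fun j _ => ?_
    simpa [mul_apply] using Finset.sum_mul_sq_le_sq_mul_sq Finset.univ (A i) (B j)
  calc rnorm ((A * Bᵀ) i) ≤ Real.sqrt ((∑ k, A i k ^ 2) * ∑ j, ∑ k, B j k ^ 2) :=
        Real.sqrt_le_sqrt hsq
    _ = rnorm (A i) * frobNorm B := Real.sqrt_mul (by positivity) _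

lemma rnorm_mul_transpose_of_orthonormal {n p m : ℕ} (M : Matrix (Fin n) (Fin m) ℝ)
    {V : Matrix (Fin p) (Fin m) ℝ} (hV : Vᵀ * V = 1) (i : Fin n) :
    rnorm ((M * Vᵀ) i) = rnorm (M i) := by
  have hgram : (M * Vᵀ) * (M * Vᵀ)ᵀ = M * Mᵀ := by
    rw [transpose_mul, transpose_transpose, Matrix.mul_assoc, ← Matrix.mul_assoc Vᵀ, hV,
      Matrix.one_mul]
  rw [rnorm_eq_sqrt_mul_transpose, rnorm_eq_sqrt_mul_transpose M, hgram]

lemma mul_transpose_sub_mul_transpose {n m : ℕ} (V W : Matrix (Fin n) (Fin m) ℝ) :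
    W * Wᵀ - V * Vᵀ = -((V - W) * Vᵀ + W * (V - W)ᵀ) := by
  rw [transpose_sub, Matrix.sub_mul, Matrix.mul_sub]
  abel

lemma rnorm_mul_transpose_sub_mul_transpose_le {n m : ℕ} {V : Matrix (Fin n) (Fin m) ℝ}
    (hV : Vᵀ * V = 1) (W : Matrix (Fin n) (Fin m) ℝ) (i : Fin n) :
    rnorm ((W * Wᵀ - V * Vᵀ) i) ≤
      rnorm ((V - W) i) + (rnorm ((V - W) i) + rnorm (V i)) * frobNorm (V - W) := by
  have hW : rnorm (W i) ≤ rnorm ((V - W) i) + rnorm (V i) := by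
    have h := rnorm_sub_le (V i) (V i - W i)
    rw [sub_sub_cancel, add_comm] at h
    exact h
  calc rnorm ((W * Wᵀ - V * Vᵀ) i)
      = rnorm (((V - W) * Vᵀ) i + (W * (V - W)ᵀ) i) := by
        rw [mul_transpose_sub_mul_transpose]
        exact rnorm_neg _
    _ ≤ rnorm (((V - W) * Vᵀ) i) + rnorm ((W * (V - W)ᵀ) i) := rnorm_add_le _ _
    _ ≤ rnorm ((V - W) i) + rnorm (W i) * frobNorm (V - W) := by
        rw [rnorm_mul_transpose_of_orthonormal _ hV]
        gcongr
        exact rnorm_mul_transpose_le _ _ _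
    _ ≤ rnorm ((V - W) i) + (rnorm ((V - W) i) + rnorm (V i)) * frobNorm (V - W) := by
        gcongr
        exact frobNorm_nonneg _

lemma twoToInfNorm_mul_transpose_sub_mul_transpose_le {n m : ℕ}
    {V : Matrix (Fin n) (Fin m) ℝ} (hV : Vᵀ * V = 1) (W : Matrix (Fin n) (Fin m) ℝ) :
    twoToInfNorm (W * Wᵀ - V * Vᵀ) ≤
      twoToInfNorm (V - W) + (twoToInfNorm (V - W) + twoToInfNorm V) * frobNorm (V - W) := by
  have hD := twoToInfNorm_nonneg (V - W)
  have hF := frobNorm_nonneg (V - W)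
  refine Real.iSup_le (fun i => ?_) (by have := twoToInfNorm_nonneg V; positivity)
  calc _ ≤ _ := rnorm_mul_transpose_sub_mul_transpose_le hV W i
    _ ≤ _ := by gcongr <;> exact rnorm_le_twoToInfNorm _ i

theorem projection_two_to_inf_bound_general {n K : ℕ}
    (V Vh : Matrix (Fin n) (Fin K) ℝ)
    (hV : Vᵀ * V = 1)
    (O : Matrix (Fin K) (Fin K) ℝ) (hO : Oᵀ * O = 1) :
    twoToInfNorm (Vh * Vhᵀ - V * Vᵀ) ≤
      twoToInfNorm (V - Vh * O) +
        (twoToInfNorm (V - Vh * O) + twoToInfNorm V) * frobNorm (V - Vh * O) := by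
  have hproj : Vh * Vhᵀ = (Vh * O) * (Vh * O)ᵀ := by
    rw [transpose_mul, Matrix.mul_assoc, ← Matrix.mul_assoc O, mul_eq_one_comm.mp hO,
      Matrix.one_mul]
  rw [hproj]
  exact twoToInfNorm_mul_transpose_sub_mul_transpose_le hV _

/-- **row-wise projection perturbation.** For `V, V̂ ∈ ℝ^{n×K}` with
orthonormal columns and any orthogonal `O ∈ ℝ^{K×K}`,
`‖V̂V̂' − VV'‖_{2→∞} ≤ ‖V − V̂O‖_{2→∞} + (‖V − V̂O‖_{2→∞} + ‖V‖_{2→∞})·‖V − V̂O‖_F`. -/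
theorem projection_two_to_inf_bound {n K : ℕ}
    (V Vh : Matrix (Fin n) (Fin K) ℝ)
    (hV : Vᵀ * V = 1) (hVh : Vhᵀ * Vh = 1)
    (O : Matrix (Fin K) (Fin K) ℝ) (hO : Oᵀ * O = 1) :
    twoToInfNorm (Vh * Vhᵀ - V * Vᵀ) ≤
      twoToInfNorm (V - Vh * O) +
        (twoToInfNorm (V - Vh * O) + twoToInfNorm V) * frobNorm (V - Vh * O) :=
  projection_two_to_inf_bound_general V Vh hV O hO
end
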